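/- arXiv:1805.03080 — 8 statements merged into one kernel-verified Lean document; each statement's English description precedes it below -/
import Mathlib

section
/- Let X = (X_1,…,X_d) be a random vector on a probability space. If X is positive supermodular associated, then X is positive upper orthant dependent: for all t_1,…,t_d ∈ ℝ, P(X_1 > t_1, …, X_d > t_d) ≥ ∏_{i=1}^d P(X_i > t_i). -/
/-!
Upper orthants `{x | ∀ i ∈ S, t i < x i}` are upper sets closed under `⊓`, so their indicators
are bounded, nondecreasing and supermodular, i.e. admissible test functions for PSA. Positive
covariance of two such indicators reads `P A * P B ≤ P (A ∩ B)`, and peeling off one coordinate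
at a time turns this into the product bound.
-/

open MeasureTheory

section IndicatorOfUpperSet

variable {α : Type*} {s : Set α}

theorem IsUpperSet.monotone_indicator_one [Preorder α] (hs : IsUpperSet s) :
    Monotone (s.indicator (1 : α → ℝ)) := by
  intro x y hxy
  by_cases hx : x ∈ s
  · simp [hx, hs hxy hx]
  · simp [hx, Set.indicator_nonneg]

theorem IsUpperSet.indicator_one_add_le [Lattice α] (hs : IsUpperSet s) (hs_inf : InfClosed s)
    (x y : α) :
    s.indicator (1 : α → ℝ) x + s.indicator 1 y ≤
      s.indicator 1 (x ⊓ y) + s.indicator 1 (x ⊔ y) := by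
  by_cases hx : x ∈ s <;> by_cases hy : y ∈ s
  · simp [hx, hy, hs_inf hx hy, hs le_sup_left hx]
  · simp [hx, hy, hs le_sup_left hx, Set.indicator_nonneg]
  · simp [hx, hy, hs le_sup_right hy, Set.indicator_nonneg]
  · simp [hx, hy, Set.indicator_nonneg, add_nonneg]

theorem Set.abs_indicator_one_le (x : α) : |s.indicator (1 : α → ℝ) x| ≤ 1 := by
  by_cases hx : x ∈ s <;> simp [hx]

end IndicatorOfUpperSet

def upperOrthant {ι β : Type*} [LT β] (t : ι → β) (S : Finset ι) : Set (ι → β) :=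
  {x | ∀ i ∈ S, t i < x i}

namespace upperOrthant

variable {ι β : Type*} (t : ι → β) (S : Finset ι)

theorem isUpperSet [Preorder β] : IsUpperSet (upperOrthant t S) :=
  fun _ _ hxy hx i hi => (hx i hi).trans_le (hxy i)

theorem infClosed [LinearOrder β] : InfClosed (upperOrthant t S) :=
  fun _ hx _ hy i hi => lt_inf_iff.2 ⟨hx i hi, hy i hi⟩

theorem measurableSet [LinearOrder β] [TopologicalSpace β] [ClosedIicTopology β]
    [MeasurableSpace β] [OpensMeasurableSpace β] : MeasurableSet (upperOrthant t S) := by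
  have : upperOrthant t S = ⋂ i ∈ S, (fun x => x i) ⁻¹' Set.Ioi (t i) := by
    ext; simp [upperOrthant]
  rw [this]
  exact .biInter S.countable_toSet fun i _ => measurableSet_Ioi.preimage (measurable_pi_apply i)

theorem biInter_singleton [LT β] : ⋂ i ∈ S, upperOrthant t {i} = upperOrthant t S := by
  ext; simp [upperOrthant]

end upperOrthant

theorem prod_measure_le_measure_biInter {ι Ω : Type*} [MeasurableSpace Ω] (μ : Measure Ω)
    [IsProbabilityMeasure μ] (A : ι → Set Ω)
    (h : ∀ i (S : Finset ι), μ (A i) * μ (⋂ j ∈ S, A j) ≤ μ (A i ∩ ⋂ j ∈ S, A j))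
    (S : Finset ι) : ∏ i ∈ S, μ (A i) ≤ μ (⋂ i ∈ S, A i) := by
  classical
  induction S using Finset.induction_on with
  | empty => simp
  | insert a S ha ih =>
    calc ∏ i ∈ insert a S, μ (A i) = μ (A a) * ∏ i ∈ S, μ (A i) := Finset.prod_insert ha
      _ ≤ μ (A a) * μ (⋂ i ∈ S, A i) := by gcongr
      _ ≤ μ (⋂ i ∈ insert a S, A i) := by rw [Finset.set_biInter_insert]; exact h a S

theorem measure_preimage_mul_le_of_integral_indicator {Ω α : Type*} [MeasurableSpace Ω]
    [MeasurableSpace α] (P : Measure Ω) [IsFiniteMeasure P] {Y : Ω → α} (hY : Measurable Y)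
    {U V : Set α} (hU : MeasurableSet U) (hV : MeasurableSet V)
    (hcov : 0 ≤ (∫ ω, U.indicator 1 (Y ω) * V.indicator 1 (Y ω) ∂P) -
      (∫ ω, U.indicator 1 (Y ω) ∂P) * ∫ ω, V.indicator (1 : α → ℝ) (Y ω) ∂P) :
    P (Y ⁻¹' U) * P (Y ⁻¹' V) ≤ P (Y ⁻¹' U ∩ Y ⁻¹' V) := by
  have hind : ∀ W : Set α, (fun ω => W.indicator (1 : α → ℝ) (Y ω)) = (Y ⁻¹' W).indicator 1 :=
    fun W => funext fun ω => (Set.indicator_comp_right Y).symm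
  have hprod : (fun ω => U.indicator (1 : α → ℝ) (Y ω) * V.indicator 1 (Y ω)) =
      (Y ⁻¹' U ∩ Y ⁻¹' V).indicator 1 := by
    rw [Set.inter_indicator_one, ← hind, ← hind]; rfl
  rw [hprod, hind, hind, integral_indicator_one ((hY hU).inter (hY hV)),
    integral_indicator_one (hY hU), integral_indicator_one (hY hV), sub_nonneg,
    measureReal_def, measureReal_def, measureReal_def, ← ENNReal.toReal_mul] at hcov
  exact (ENNReal.toReal_le_toReal (by finiteness) (by finiteness)).1 hcov

/-- If the random vector `X = (X_1,…,X_d)` is positive supermodular associated,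
then it is positive upper orthant dependent. -/
theorem PSA_implies_PUOD
    {Ω : Type*} [MeasurableSpace Ω] (P : Measure Ω) [IsProbabilityMeasure P]
    (d : ℕ) (X : Fin d → Ω → ℝ) (hX : ∀ i, Measurable (X i))
    (PSA : ∀ f g : (Fin d → ℝ) → ℝ, Measurable f → Measurable g →
      Monotone f → Monotone g →
      (∀ x y, f x + f y ≤ f (x ⊓ y) + f (x ⊔ y)) →
      (∀ x y, g x + g y ≤ g (x ⊓ y) + g (x ⊔ y)) →
      (∃ C, ∀ x, |f x| ≤ C) → (∃ C, ∀ x, |g x| ≤ C) →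
      0 ≤ (∫ ω, f (fun i => X i ω) * g (fun i => X i ω) ∂P) -
          (∫ ω, f (fun i => X i ω) ∂P) * (∫ ω, g (fun i => X i ω) ∂P)) :
    ∀ t : Fin d → ℝ, ∏ i, P {ω | t i < X i ω} ≤ P {ω | ∀ i, t i < X i ω} := by
  intro t
  set Y : Ω → Fin d → ℝ := fun ω i => X i ω
  have hY : Measurable Y := measurable_pi_lambda _ hX
  have hcov : ∀ U V : Set (Fin d → ℝ), MeasurableSet U → MeasurableSet V →
      IsUpperSet U → IsUpperSet V → InfClosed U → InfClosed V →
      P (Y ⁻¹' U) * P (Y ⁻¹' V) ≤ P (Y ⁻¹' U ∩ Y ⁻¹' V) :=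
    fun U V hU hV hUup hVup hUinf hVinf =>
      measure_preimage_mul_le_of_integral_indicator P hY hU hV <| PSA _ _
        (measurable_one.indicator hU) (measurable_one.indicator hV)
        hUup.monotone_indicator_one hVup.monotone_indicator_one
        (hUup.indicator_one_add_le hUinf) (hVup.indicator_one_add_le hVinf)
        ⟨1, Set.abs_indicator_one_le⟩ ⟨1, Set.abs_indicator_one_le⟩
  have hstep : ∀ i S, P (Y ⁻¹' upperOrthant t {i}) * P (⋂ j ∈ S, Y ⁻¹' upperOrthant t {j}) ≤
      P (Y ⁻¹' upperOrthant t {i} ∩ ⋂ j ∈ S, Y ⁻¹' upperOrthant t {j}) := fun i S => by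
    rw [← Set.preimage_iInter₂, upperOrthant.biInter_singleton]
    exact hcov _ _ (upperOrthant.measurableSet t {i}) (upperOrthant.measurableSet t S)
      (upperOrthant.isUpperSet t {i}) (upperOrthant.isUpperSet t S)
      (upperOrthant.infClosed t {i}) (upperOrthant.infClosed t S)
  convert prod_measure_le_measure_biInter P _ hstep Finset.univ using 3 <;>
    ext <;> simp [upperOrthant, Y]
end

section
/- Let X = (X_1,…,X_d) be a random vector on a probability space and let X̂ = (X̂_1,…,X̂_d) be a random vector whose components are mutually independent with X̂_i equal in distribution to X_i for each i. If X is weakly associated, then X is positive supermodular dependent for bounded continuous test functions: for every bounded continuous supermodular function f : ℝ^d → ℝ, E f(X̂) ≤ E f(X). -/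
/-!
Replace the coordinates of `X̂` by those of `X` one at a time. If `s` is the set of coordinates
already taken from `X` and `k ∉ s`, conditioning on the coordinates of `X̂` other than `k` (which
are independent of `X̂ₖ`) reduces the step `s → insert k s` to `E h(X, X'ₖ) ≤ E h(X, Xₖ)`, where
`X'ₖ` is an independent copy of `Xₖ` and `h(x, v)` is supermodular and depends on `x` only through
`x_s`. Rounding `v` down to a finite dyadic grid and telescoping along the grid writes `h(x, v)` as
`h(x, v₀) + ∑ⱼ φⱼ(x_s) ψⱼ(v)` with `φⱼ, ψⱼ` nondecreasing (by supermodularity), so the discretized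
inequality is weak association of `(X_s, Xₖ)` term by term; dominated convergence removes the
rounding.
-/

open MeasureTheory ProbabilityTheory Filter Topology Function

def Supermodular {α : Type*} [Lattice α] (f : α → ℝ) : Prop :=
  ∀ x y, f x + f y ≤ f (x ⊓ y) + f (x ⊔ y)

namespace Supermodular

variable {α β : Type*} [Lattice α] [Lattice β]

theorem comp {f : β → ℝ} (hf : Supermodular f) {g : α → β}
    (hinf : ∀ x y, g (x ⊓ y) = g x ⊓ g y) (hsup : ∀ x y, g (x ⊔ y) = g x ⊔ g y) :
    Supermodular (f ∘ g) := fun x y => by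
  simpa only [comp_apply, hinf, hsup] using hf (g x) (g y)

theorem monotone_sub {h : α × β → ℝ} (hh : Supermodular h) {v v' : β} (hv : v ≤ v') :
    Monotone fun x => h (x, v') - h (x, v) := by
  intro x x' hx
  have := hh (x, v') (x', v)
  simp only [Prod.mk_inf_mk, Prod.mk_sup_mk, inf_eq_left.2 hx, sup_eq_right.2 hx,
    inf_eq_right.2 hv, sup_eq_left.2 hv] at this
  linarith

variable {ι : Type*} [DecidableEq ι]

theorem comp_piecewise_update {f : (ι → ℝ) → ℝ} (hf : Supermodular f)
    (s : Finset ι) (w : ι → ℝ) (k : ι) :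
    Supermodular fun p : (ι → ℝ) × ℝ => f (s.piecewise p.1 (update w k p.2)) := by
  refine hf.comp (g := fun p : (ι → ℝ) × ℝ => s.piecewise p.1 (update w k p.2)) ?_ ?_ <;>
  · intro p q
    ext i
    by_cases hi : i ∈ s
    · simp [hi]
    · by_cases hik : i = k
      · subst hik; simp [hi]
      · simp [hi, hik]

end Supermodular

theorem Finset.sum_range_ite_lt_sub {G : Type*} [AddCommGroup G] (g : ℕ → G) {m M : ℕ}
    (hm : m ≤ M) : ∑ j ∈ range M, (if j < m then g (j + 1) - g j else 0) = g m - g 0 := by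
  rw [← sum_filter, show (range M).filter (· < m) = range m by ext; simp; omega,
    sum_range_sub]

section Dyadic

noncomputable def dyadicPoint (n j : ℕ) : ℝ := -n + j / 2 ^ n

/-- `dyadicPoint n (dyadicIndex n v)` is `v` rounded down to `2⁻ⁿℤ` and clamped to `[-n, n]`;
the clamp keeps the grid finite. -/
noncomputable def dyadicIndex (n : ℕ) (v : ℝ) : ℕ := min (2 * n * 2 ^ n) ⌊(v + n) * 2 ^ n⌋₊

theorem dyadicPoint_mono (n : ℕ) : Monotone (dyadicPoint n) := fun j j' hj => by
  unfold dyadicPoint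
  gcongr

theorem dyadicIndex_mono (n : ℕ) : Monotone (dyadicIndex n) := fun v v' hv => by
  unfold dyadicIndex
  gcongr

theorem dyadicIndex_le (n : ℕ) (v : ℝ) : dyadicIndex n v ≤ 2 * n * 2 ^ n := min_le_left _ _

theorem tendsto_dyadicPoint_dyadicIndex (v : ℝ) :
    Tendsto (fun n => dyadicPoint n (dyadicIndex n v)) atTop (𝓝 v) := by
  have hlow : Tendsto (fun n : ℕ => v - (1 / 2) ^ n) atTop (𝓝 v) := by
    simpa using tendsto_const_nhds.sub
      (tendsto_pow_atTop_nhds_zero_of_lt_one (by norm_num : (0 : ℝ) ≤ 1 / 2) (by norm_num))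
  refine tendsto_of_tendsto_of_tendsto_of_le_of_le' hlow tendsto_const_nhds ?_ ?_
  all_goals
    filter_upwards [eventually_ge_atTop ⌈|v|⌉₊] with n hn
    have hvn : |v| ≤ n := (Nat.le_ceil _).trans (by exact_mod_cast hn)
    have h2 : (0 : ℝ) < 2 ^ n := by positivity
    have ha : 0 ≤ (v + n) * 2 ^ n := mul_nonneg (by linarith [neg_abs_le v]) h2.le
    have hfl := Nat.floor_le ha
    have hlt := Nat.lt_floor_add_one ((v + n) * 2 ^ n)
    have hidx : dyadicIndex n v = ⌊(v + n) * 2 ^ n⌋₊ := by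
      refine min_eq_right (Nat.floor_le_of_le ?_)
      push_cast
      nlinarith [le_abs_self v]
    simp only [dyadicPoint, hidx]
  · have := div_le_div_of_nonneg_right (sub_le_iff_le_add.2 hlt.le) h2.le
    rw [sub_div, mul_div_cancel_right₀ _ h2.ne'] at this
    rw [one_div_pow]
    linarith
  · have := div_le_div_of_nonneg_right hfl h2.le
    rw [mul_div_cancel_right₀ _ h2.ne'] at this
    linarith

end Dyadic

section BoundedIntegrands

variable {Ω α β : Type*} [MeasurableSpace Ω] [MeasurableSpace α] [MeasurableSpace β]

theorem norm_integral_le_of_forall_norm_le (μ : Measure Ω) [IsProbabilityMeasure μ]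
    {g : Ω → ℝ} {C : ℝ} (hC : ∀ ω, ‖g ω‖ ≤ C) : ‖∫ ω, g ω ∂μ‖ ≤ C :=
  norm_integral_le_of_norm_le_const (ae_of_all _ hC) |>.trans (by simp)

theorem integrable_integral_comp {F : α × β → ℝ} (hF : StronglyMeasurable F) {C : ℝ}
    (hC : ∀ p, ‖F p‖ ≤ C) (ν : Measure β) [IsProbabilityMeasure ν] {W : Ω → α}
    (hW : Measurable W) (μ : Measure Ω) [IsFiniteMeasure μ] :
    Integrable (fun ω => ∫ y, F (W ω, y) ∂ν) μ :=
  .of_bound (hF.integral_prod_right'.comp_measurable hW).aestronglyMeasurable C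
    (ae_of_all _ fun _ => norm_integral_le_of_forall_norm_le ν fun _ => hC _)

end BoundedIntegrands

section Independence

variable {Ω α β ι : Type*} [MeasurableSpace Ω] [MeasurableSpace α] [MeasurableSpace β]
  {μ : Measure Ω}

theorem ProbabilityTheory.IndepFun.integral_comp_eq_integral_integral_map [IsProbabilityMeasure μ]
    {U : Ω → α} {V : Ω → β}
    (hUV : IndepFun U V μ) (hU : Measurable U) (hV : Measurable V) {G : α × β → ℝ}
    (hG : StronglyMeasurable G) {C : ℝ} (hC : ∀ p, ‖G p‖ ≤ C) :
    ∫ ω, G (U ω, V ω) ∂μ = ∫ ω, ∫ v, G (U ω, v) ∂(μ.map V) ∂μ := by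
  have := Measure.isProbabilityMeasure_map (μ := μ) hU.aemeasurable
  have := Measure.isProbabilityMeasure_map (μ := μ) hV.aemeasurable
  calc ∫ ω, G (U ω, V ω) ∂μ = ∫ p, G p ∂((μ.map U).prod (μ.map V)) := by
        rw [← (indepFun_iff_map_prod_eq_prod_map_map hU.aemeasurable hV.aemeasurable).1 hUV,
          integral_map (hU.prodMk hV).aemeasurable hG.aestronglyMeasurable]
    _ = ∫ u, ∫ v, G (u, v) ∂(μ.map V) ∂(μ.map U) :=
        integral_prod G (.of_bound hG.aestronglyMeasurable C (ae_of_all _ hC))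
    _ = ∫ ω, ∫ v, G (U ω, v) ∂(μ.map V) ∂μ :=
        integral_map hU.aemeasurable hG.integral_prod_right'.aestronglyMeasurable

theorem ProbabilityTheory.iIndepFun.indepFun_update [Fintype ι] [DecidableEq ι] {Y : ι → Ω → β}
    (hY : iIndepFun Y μ) (hYm : ∀ i, Measurable (Y i)) (k : ι) (b : β) :
    IndepFun (fun ω => update (fun i => Y i ω) k b) (Y k) μ := by
  have hind := (hY.indepFun_finset _ _ (Finset.disjoint_singleton_right.2
    (Finset.notMem_erase k Finset.univ)) hYm).comp
    (measurable_updateFinset (x := fun _ => b))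
    (measurable_pi_apply ⟨k, Finset.mem_singleton_self k⟩)
  have hW : (fun ω => update (fun i => Y i ω) k b) =
      updateFinset (fun _ => b) (Finset.univ.erase k) ∘
        fun ω (i : Finset.univ.erase k) => Y i ω := by
    ext ω i
    by_cases hi : i = k
    · subst hi; simp [updateFinset]
    · simp [updateFinset, hi]
  rw [hW]
  exact hind

end Independence

section WeakAssociation

variable {Ω ι : Type*} [MeasurableSpace Ω]

def WeaklyAssociated (P : Measure Ω) (X : ι → Ω → ℝ) : Prop :=
  ∀ (I J : Finset ι), Disjoint I J →
    ∀ (f : (I → ℝ) → ℝ) (g : (J → ℝ) → ℝ), Measurable f → Measurable g →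
      Monotone f → Monotone g → (∃ C, ∀ x, |f x| ≤ C) → (∃ C, ∀ x, |g x| ≤ C) →
      0 ≤ (∫ ω, f (fun i => X i.1 ω) * g (fun j => X j.1 ω) ∂P) -
        (∫ ω, f (fun i => X i.1 ω) ∂P) * (∫ ω, g (fun j => X j.1 ω) ∂P)

variable {P : Measure Ω} {X : ι → Ω → ℝ}

theorem WeaklyAssociated.integral_mul_integral_le (hWA : WeaklyAssociated P X)
    {I J : Finset ι} (hIJ : Disjoint I J) {φ ψ : (ι → ℝ) → ℝ}
    (hφI : DependsOn φ I) (hψJ : DependsOn ψ J) (hφm : Measurable φ) (hψm : Measurable ψ)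
    (hφ : Monotone φ) (hψ : Monotone ψ) {C D : ℝ} (hφC : ∀ x, ‖φ x‖ ≤ C)
    (hψD : ∀ x, ‖ψ x‖ ≤ D) :
    (∫ ω, φ (fun i => X i ω) ∂P) * ∫ ω, ψ (fun i => X i ω) ∂P ≤
      ∫ ω, φ (fun i => X i ω) * ψ (fun i => X i ω) ∂P := by
  classical
  have restrict_extend {K : Finset ι} {χ : (ι → ℝ) → ℝ} (hχ : DependsOn χ K) (ω : Ω) :
      χ (updateFinset 0 K fun i : K => X i ω) = χ (fun i => X i ω) :=
    hχ fun i hi => by simp [updateFinset, Finset.mem_coe.1 hi]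
  have extend_mono (K : Finset ι) : Monotone (updateFinset (0 : ι → ℝ) K) := fun y y' hy i => by
    unfold updateFinset
    split_ifs
    exacts [hy _, le_rfl]
  have := hWA I J hIJ (φ ∘ updateFinset (0 : ι → ℝ) I) (ψ ∘ updateFinset (0 : ι → ℝ) J)
    (hφm.comp measurable_updateFinset) (hψm.comp measurable_updateFinset)
    (hφ.comp (extend_mono I)) (hψ.comp (extend_mono J))
    ⟨C, fun y => by simpa using hφC _⟩ ⟨D, fun y => by simpa using hψD _⟩
  simp only [comp_apply, restrict_extend hφI, restrict_extend hψJ] at this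
  linarith

variable [IsProbabilityMeasure P]

open Finset in
theorem WeaklyAssociated.integral_integral_map_le_discrete (hWA : WeaklyAssociated P X)
    (hX : ∀ i, Measurable (X i)) {I : Finset ι} {k : ι} (hk : k ∉ I)
    {h : (ι → ℝ) × ℕ → ℝ} (hh : Supermodular h) (hI : ∀ j, DependsOn (fun x => h (x, j)) I)
    (hm : ∀ j, Measurable fun x => h (x, j)) {C : ℝ} (hC : ∀ p, ‖h p‖ ≤ C)
    {c : ℝ → ℕ} (hc : Monotone c) {M : ℕ} (hcM : ∀ v, c v ≤ M) :
    ∫ v, ∫ ω, h (fun i => X i ω, c v) ∂P ∂(P.map (X k)) ≤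
      ∫ ω, h (fun i => X i ω, c (X k ω)) ∂P := by
  have := Measure.isProbabilityMeasure_map (μ := P) (hX k).aemeasurable
  have hXm : Measurable fun ω i => X i ω := measurable_pi_lambda _ hX
  set Δ : ℕ → (ι → ℝ) → ℝ := fun j x => h (x, j + 1) - h (x, j)
  set ind : ℕ → ℝ → ℝ := fun j v => if j < c v then 1 else 0
  have expand (x : ι → ℝ) (v : ℝ) :
      h (x, c v) = h (x, 0) + ∑ j ∈ range M, Δ j x * ind j v := by
    simp only [Δ, ind, mul_ite, mul_one, mul_zero,
      sum_range_ite_lt_sub (fun j => h (x, j)) (hcM v)]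
    ring
  have hind_mono (j : ℕ) : Monotone (ind j) := fun v v' hv => by
    simp only [ind]
    split_ifs with h₁ h₂
    · rfl
    · exact absurd (h₁.trans_le (hc hv)) h₂
    all_goals norm_num
  have hind_bound (j : ℕ) (v : ℝ) : ‖ind j v‖ ≤ 1 := by simp only [ind]; split_ifs <;> simp
  have hΔ_bound (j : ℕ) (x : ι → ℝ) : ‖Δ j x‖ ≤ 2 * C :=
    (norm_sub_le _ _).trans (by linarith [hC (x, j + 1), hC (x, j)])
  have hΔ_int (j : ℕ) : Integrable (fun ω => Δ j (fun i => X i ω)) P :=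
    .of_bound ((((hm _).sub (hm _)).comp hXm).aestronglyMeasurable) _
      (ae_of_all _ fun ω => hΔ_bound j _)
  have hind_int (j : ℕ) : Integrable (ind j) (P.map (X k)) :=
    .of_bound (hind_mono j).measurable.aestronglyMeasurable _ (ae_of_all _ (hind_bound j))
  have hprod_int (j : ℕ) :
      Integrable (fun ω => Δ j (fun i => X i ω) * ind j (X k ω)) P :=
    (hΔ_int j).mul_bdd ((hind_mono j).measurable.comp (hX k)).aestronglyMeasurable
      (ae_of_all _ fun ω => hind_bound j _)
  have h0_int : Integrable (fun ω => h (fun i => X i ω, 0)) P :=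
    .of_bound ((hm 0).comp hXm).aestronglyMeasurable _ (ae_of_all _ fun ω => hC _)
  have hinner (v : ℝ) : ∫ ω, h (fun i => X i ω, c v) ∂P =
      ∫ ω, h (fun i => X i ω, 0) ∂P + ∑ j ∈ range M, (∫ ω, Δ j (fun i => X i ω) ∂P) * ind j v := by
    simp_rw [expand _ v]
    rw [integral_add h0_int (integrable_finsetSum _ fun j _ => (hΔ_int j).mul_const _),
      integral_finsetSum _ fun j _ => (hΔ_int j).mul_const _]
    simp_rw [integral_mul_const]
  calc ∫ v, ∫ ω, h (fun i => X i ω, c v) ∂P ∂(P.map (X k))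
      = ∫ ω, h (fun i => X i ω, 0) ∂P +
          ∑ j ∈ range M, (∫ ω, Δ j (fun i => X i ω) ∂P) * ∫ ω, ind j (X k ω) ∂P := by
        simp_rw [hinner]
        rw [integral_add (integrable_const _)
            (integrable_finsetSum _ fun j _ => (hind_int j).const_mul _),
          integral_finsetSum _ fun j _ => (hind_int j).const_mul _]
        simp_rw [integral_const_mul, integral_map (hX k).aemeasurable
          (hind_mono _).measurable.aestronglyMeasurable]
        simp
    _ ≤ ∫ ω, h (fun i => X i ω, 0) ∂P +
          ∑ j ∈ range M, ∫ ω, Δ j (fun i => X i ω) * ind j (X k ω) ∂P := by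
        gcongr with j
        exact hWA.integral_mul_integral_le (disjoint_singleton_right.2 hk)
          (fun x y hxy => congr_arg₂ (· - ·) (hI _ hxy) (hI _ hxy))
          (fun x y hxy => by simp [ind, hxy k (by simp)])
          ((hm _).sub (hm _)) ((hind_mono j).measurable.comp (measurable_pi_apply k))
          ((hh.monotone_sub (Nat.le_succ j))) ((hind_mono j).comp fun x y hxy => hxy k)
          (hΔ_bound j) (fun x => hind_bound j (x k))
    _ = ∫ ω, h (fun i => X i ω, c (X k ω)) ∂P := by
        simp_rw [expand _ (X k _)]
        rw [integral_add h0_int (integrable_finsetSum _ fun j _ => hprod_int j),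
          integral_finsetSum _ fun j _ => hprod_int j]

theorem WeaklyAssociated.integral_integral_map_le [Countable ι] (hWA : WeaklyAssociated P X)
    (hX : ∀ i, Measurable (X i)) {I : Finset ι} {k : ι} (hk : k ∉ I)
    {h : (ι → ℝ) × ℝ → ℝ} (hh : Supermodular h) (hI : ∀ v, DependsOn (fun x => h (x, v)) I)
    (hcont : Continuous h) {C : ℝ} (hC : ∀ p, ‖h p‖ ≤ C) :
    ∫ v, ∫ ω, h (fun i => X i ω, v) ∂P ∂(P.map (X k)) ≤ ∫ ω, h (fun i => X i ω, X k ω) ∂P := by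
  have hXm : Measurable fun ω i => X i ω := measurable_pi_lambda _ hX
  have hΦ : Continuous fun v => ∫ ω, h (fun i => X i ω, v) ∂P :=
    continuous_of_dominated
      (fun v => (hcont.measurable.comp (hXm.prodMk measurable_const)).aestronglyMeasurable)
      (fun v => ae_of_all _ fun ω => hC _) (integrable_const C) (ae_of_all _ fun ω => by fun_prop)
  have hdiscrete (n : ℕ) :
      ∫ v, ∫ ω, h (fun i => X i ω, dyadicPoint n (dyadicIndex n v)) ∂P ∂(P.map (X k)) ≤
        ∫ ω, h (fun i => X i ω, dyadicPoint n (dyadicIndex n (X k ω))) ∂P :=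
    hWA.integral_integral_map_le_discrete (h := fun p => h (p.1, dyadicPoint n p.2)) hX hk
      (hh.comp (g := Prod.map id (dyadicPoint n))
        (fun _ _ => Prod.ext rfl (dyadicPoint_mono n).map_min)
        (fun _ _ => Prod.ext rfl (dyadicPoint_mono n).map_max))
      (fun j => hI (dyadicPoint n j))
      (fun j => hcont.measurable.comp
        (measurable_id.prodMk (measurable_const (a := dyadicPoint n j))))
      (fun _ => hC _) (dyadicIndex_mono n) (dyadicIndex_le n)
  refine le_of_tendsto_of_tendsto' (b := atTop) ?_ ?_ hdiscrete
  · have := Measure.isProbabilityMeasure_map (μ := P) (hX k).aemeasurable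
    refine tendsto_integral_of_dominated_convergence (fun _ => C) (fun n => ?_)
      (integrable_const C) (fun n => ae_of_all _ fun v => ?_)
      (ae_of_all _ fun v => (hΦ.tendsto v).comp (tendsto_dyadicPoint_dyadicIndex v))
    · exact (hΦ.measurable.comp ((dyadicPoint_mono n).measurable.comp
        (dyadicIndex_mono n).measurable)).aestronglyMeasurable
    · exact norm_integral_le_of_forall_norm_le P fun ω => hC _
  · refine tendsto_integral_of_dominated_convergence (fun _ => C) (fun n => ?_)
      (integrable_const C) (fun n => ae_of_all _ fun ω => hC _)
      (ae_of_all _ fun ω => ((hcont.comp (Continuous.prodMk_right _)).tendsto _).comp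
        (tendsto_dyadicPoint_dyadicIndex (X k ω)))
    exact (hcont.measurable.comp (hXm.prodMk ((dyadicPoint_mono n).measurable.comp
        ((dyadicIndex_mono n).measurable.comp (hX k))))).aestronglyMeasurable


end WeakAssociation

section Hybrid

variable {ι : Type*} [DecidableEq ι]

theorem continuous_piecewise_update (s : Finset ι) (k : ι) :
    Continuous fun q : (ι → ℝ) × (ι → ℝ) × ℝ => s.piecewise q.1 (update q.2.1 k q.2.2) :=
  continuous_pi fun i => by
    by_cases hi : i ∈ s
    · simp only [Finset.piecewise_eq_of_mem _ _ _ hi]; fun_prop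
    · simp only [Finset.piecewise_eq_of_notMem _ _ _ hi]
      exact continuous_apply i |>.comp (continuous_fst.comp continuous_snd |>.update k
        (continuous_snd.comp continuous_snd))

variable [Fintype ι] {Ω Ω' : Type*} [MeasurableSpace Ω] [MeasurableSpace Ω']
  {P : Measure Ω} {P' : Measure Ω'} [IsProbabilityMeasure P] [IsProbabilityMeasure P']
  {X : ι → Ω → ℝ} {Y : ι → Ω' → ℝ}

theorem WeaklyAssociated.integral_piecewise_le_integral_piecewise_insert
    (hWA : WeaklyAssociated P X) (hX : ∀ i, Measurable (X i)) (hY : ∀ i, Measurable (Y i))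
    (hindep : iIndepFun Y P') (hid : ∀ i, IdentDistrib (Y i) (X i) P' P)
    {f : (ι → ℝ) → ℝ} (hf : Continuous f) {C : ℝ} (hC : ∀ x, ‖f x‖ ≤ C) (hsm : Supermodular f)
    {s : Finset ι} {k : ι} (hk : k ∉ s) :
    ∫ ω', ∫ ω, f (s.piecewise (fun i => X i ω) (fun i => Y i ω')) ∂P ∂P' ≤
      ∫ ω', ∫ ω, f ((insert k s).piecewise (fun i => X i ω) (fun i => Y i ω')) ∂P ∂P' := by
  have := Measure.isProbabilityMeasure_map (μ := P) (hX k).aemeasurable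
  -- `W` forgets the `k`-th coordinate of `Y`, so it is independent of `Y k`; the integrands below
  -- only see it through `update (W ω') k _`.
  set W : Ω' → ι → ℝ := fun ω' => update (fun i => Y i ω') k 0
  have hWm : Measurable W := measurable_update_left.comp (measurable_pi_lambda _ hY)
  set F : ((ι → ℝ) × ℝ) × Ω → ℝ := fun q =>
    f (s.piecewise (fun i => X i q.2) (update q.1.1 k q.1.2))
  have hF : StronglyMeasurable F :=
    (hf.measurable.comp ((continuous_piecewise_update s k).measurable.comp
      (((measurable_pi_lambda _ hX).comp measurable_snd).prodMk measurable_fst))).stronglyMeasurable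
  have hFC (q : ((ι → ℝ) × ℝ) × Ω) : ‖F q‖ ≤ C := hC _
  have hF' : StronglyMeasurable fun q : (ι → ℝ) × Ω => F ((q.1, X k q.2), q.2) :=
    hF.comp_measurable ((measurable_fst.prodMk ((hX k).comp measurable_snd)).prodMk measurable_snd)
  set G : (ι → ℝ) × ℝ → ℝ := fun p => ∫ ω, F (p, ω) ∂P
  have hleft (x y : ι → ℝ) : s.piecewise x y = s.piecewise x (update (update y k 0) k (y k)) := by
    rw [update_idem, update_eq_self]
  have hright (x y : ι → ℝ) :
      (insert k s).piecewise x y = s.piecewise x (update (update y k 0) k (x k)) := by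
    rw [Finset.piecewise_insert, s.update_piecewise_of_notMem _ _ hk, update_idem]
  calc ∫ ω', ∫ ω, f (s.piecewise (fun i => X i ω) (fun i => Y i ω')) ∂P ∂P'
      = ∫ ω', G (W ω', Y k ω') ∂P' := by simp_rw [G, F, W, ← hleft]
    _ = ∫ ω', ∫ v, G (W ω', v) ∂(P.map (X k)) ∂P' := by
        rw [(hindep.indepFun_update hY k 0).integral_comp_eq_integral_integral_map hWm (hY k)
          hF.integral_prod_right' (fun p => norm_integral_le_of_forall_norm_le P (fun ω => hFC _)),
          (hid k).map_eq]
    _ ≤ ∫ ω', ∫ ω, F ((W ω', X k ω), ω) ∂P ∂P' :=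
        integral_mono
          (integrable_integral_comp hF.integral_prod_right'
            (fun p => norm_integral_le_of_forall_norm_le P (fun ω => hFC _)) _ hWm P')
          (integrable_integral_comp hF' (fun _ => hFC _) P hWm P')
          fun ω' => hWA.integral_integral_map_le hX hk
            (h := fun p => f (s.piecewise p.1 (update (W ω') k p.2)))
            (hsm.comp_piecewise_update s (W ω') k)
            (fun v x y hxy => congrArg f (s.piecewise_congr hxy fun _ _ => rfl))
            (hf.comp ((continuous_piecewise_update s k).comp
              (continuous_fst.prodMk (continuous_const.prodMk continuous_snd))))
            (fun _ => hC _)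
    _ = ∫ ω', ∫ ω, f ((insert k s).piecewise (fun i => X i ω) (fun i => Y i ω')) ∂P ∂P' := by
        simp_rw [F, W, ← hright]

end Hybrid

/-- If the random vector `X = (X_1,…,X_d)` is weakly associated and `X̂` is a
random vector with mutually independent components satisfying `X̂ᵢ =ᵈ Xᵢ`, then for every
bounded continuous supermodular `f : ℝ^d → ℝ` one has `E f(X̂) ≤ E f(X)`. -/
theorem weakly_associated_implies_PSD
    {Ω : Type*} [MeasurableSpace Ω] (P : Measure Ω) [IsProbabilityMeasure P]
    {Ω' : Type*} [MeasurableSpace Ω'] (P' : Measure Ω') [IsProbabilityMeasure P']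
    (d : ℕ) (X : Fin d → Ω → ℝ) (hX : ∀ i, Measurable (X i))
    (Xhat : Fin d → Ω' → ℝ) (hXhat : ∀ i, Measurable (Xhat i))
    (hindep : iIndepFun (m := fun _ => (inferInstance : MeasurableSpace ℝ)) Xhat P')
    (hid : ∀ i, IdentDistrib (Xhat i) (X i) P' P)
    (WA : ∀ (I J : Finset (Fin d)), Disjoint I J →
      ∀ (f : (I → ℝ) → ℝ) (g : (J → ℝ) → ℝ), Measurable f → Measurable g →
        Monotone f → Monotone g → (∃ C, ∀ x, |f x| ≤ C) → (∃ C, ∀ x, |g x| ≤ C) →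
        0 ≤ (∫ ω, f (fun i => X i.1 ω) * g (fun j => X j.1 ω) ∂P) -
            (∫ ω, f (fun i => X i.1 ω) ∂P) * (∫ ω, g (fun j => X j.1 ω) ∂P)) :
    ∀ f : (Fin d → ℝ) → ℝ, Continuous f → (∃ C, ∀ x, |f x| ≤ C) →
      (∀ x y, f x + f y ≤ f (x ⊓ y) + f (x ⊔ y)) →
      (∫ ω, f (fun i => Xhat i ω) ∂P') ≤ ∫ ω, f (fun i => X i ω) ∂P := by
  rintro f hf ⟨C, hC⟩ hsm
  have hhybrid (s : Finset (Fin d)) :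
      ∫ ω', ∫ ω, f ((∅ : Finset (Fin d)).piecewise (fun i => X i ω) (fun i => Xhat i ω')) ∂P ∂P' ≤
        ∫ ω', ∫ ω, f (s.piecewise (fun i => X i ω) (fun i => Xhat i ω')) ∂P ∂P' := by
    induction s using Finset.induction_on with
    | empty => exact le_rfl
    | insert k s hk ih =>
      exact ih.trans <| WeaklyAssociated.integral_piecewise_le_integral_piecewise_insert WA hX hXhat
        hindep hid hf (C := C) (by simpa using hC) hsm hk
  simpa using hhybrid Finset.univ
end

section
/- Let X = (X_1,…,X_d) be a random vector on a probability space and let X̂ = (X̂_1,…,X̂_d) be a random vector whose components are mutually independent with X̂_i equal in distribution to X_i for each i. If E f(X̂) ≤ E f(X) for every bounded measurable supermodular function f : ℝ^d → ℝ, then X is positive upper orthant dependent: for all t_1,…,t_d ∈ ℝ, P(X_1 > t_1, …, X_d > t_d) ≥ ∏_{i=1}^d P(X_i > t_i). -/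
/-!
The indicator of the open upper orthant `{x | t < x}` is bounded, measurable and supermodular,
because the orthant is an inf-closed upper set. Its expectation under `X` is the joint tail
probability, and under `X̂` it factors, by independence, into the product of the marginal tail
probabilities.
-/

open MeasureTheory ProbabilityTheory Set

theorem isUpperSet_univ_pi {ι : Type*} {α : ι → Type*} [∀ i, Preorder (α i)]
    {s : ∀ i, Set (α i)} (hs : ∀ i, IsUpperSet (s i)) : IsUpperSet (univ.pi s) :=
  fun _ _ hxy hx i _ => hs i (hxy i) (hx i trivial)

theorem IsUpperSet.indicator_one_add_le_inf_add_sup {α : Type*} [Lattice α] {S : Set α}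
    (hup : IsUpperSet S) (hinf : InfClosed S) (x y : α) :
    S.indicator (1 : α → ℝ) x + S.indicator 1 y ≤
      S.indicator 1 (x ⊓ y) + S.indicator 1 (x ⊔ y) := by
  by_cases hx : x ∈ S <;> by_cases hy : y ∈ S
  · simp [hx, hy, hinf hx hy, hup le_sup_left hx]
  · simp [hx, hy, hup le_sup_left hx, indicator_nonneg]
  · simp [hx, hy, hup le_sup_right hy, indicator_nonneg]
  · simp [hx, hy, indicator_nonneg, add_nonneg]

theorem integral_indicator_one_comp {Ω β : Type*} [MeasurableSpace Ω] [MeasurableSpace β]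
    {μ : Measure Ω} {Y : Ω → β} (hY : Measurable Y) {S : Set β} (hS : MeasurableSet S) :
    ∫ ω, S.indicator 1 (Y ω) ∂μ = μ.real (Y ⁻¹' S) := by
  simp_rw [← indicator_comp_right]
  exact integral_indicator_one (hY hS)

theorem ProbabilityTheory.iIndepFun.measure_preimage_univ_pi {Ω ι : Type*} [MeasurableSpace Ω]
    {μ : Measure Ω} [Fintype ι] {β : ι → Type*} [∀ i, MeasurableSpace (β i)]
    {Y : ∀ i, Ω → β i} (h : iIndepFun Y μ) {s : ∀ i, Set (β i)}
    (hs : ∀ i, MeasurableSet (s i)) :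
    μ ((fun ω i => Y i ω) ⁻¹' univ.pi s) = ∏ i, μ (Y i ⁻¹' s i) := by
  have h_preimage : (fun ω i => Y i ω) ⁻¹' univ.pi s = ⋂ i, Y i ⁻¹' s i := by ext; simp
  simpa [h_preimage] using h.measure_inter_preimage_eq_mul Finset.univ (fun i _ => hs i)

theorem PSD_implies_PUOD_general
    {Ω : Type*} [MeasurableSpace Ω] (P : Measure Ω) [IsProbabilityMeasure P]
    {Ω' : Type*} [MeasurableSpace Ω'] (P' : Measure Ω')
    (d : ℕ) (X : Fin d → Ω → ℝ) (hX : ∀ i, Measurable (X i))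
    (Xhat : Fin d → Ω' → ℝ) (hXhat : ∀ i, Measurable (Xhat i))
    (hindep : iIndepFun Xhat P')
    (hid : ∀ i, IdentDistrib (Xhat i) (X i) P' P)
    (PSD : ∀ f : (Fin d → ℝ) → ℝ, Measurable f → (∃ C, ∀ x, |f x| ≤ C) →
      (∀ x y, f x + f y ≤ f (x ⊓ y) + f (x ⊔ y)) →
      (∫ ω, f (fun i => Xhat i ω) ∂P') ≤ ∫ ω, f (fun i => X i ω) ∂P) :
    ∀ t : Fin d → ℝ, ∏ i, P {ω | t i < X i ω} ≤ P {ω | ∀ i, t i < X i ω} := by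
  intro t
  set S : Set (Fin d → ℝ) := univ.pi fun i => Ioi (t i)
  have hS : MeasurableSet S := .univ_pi fun _ => measurableSet_Ioi
  have hS_bdd (x : Fin d → ℝ) : |S.indicator 1 x| ≤ (1 : ℝ) := by
    simpa using norm_indicator_le_norm_self (s := S) (f := (1 : (Fin d → ℝ) → ℝ)) (a := x)
  have hS_super := (isUpperSet_univ_pi fun i => isUpperSet_Ioi (t i))
    |>.indicator_one_add_le_inf_add_sup (infClosed_pi fun i _ => LinearOrder.infClosed (Ioi (t i)))
  have key := PSD (S.indicator 1) (measurable_one.indicator hS) ⟨1, hS_bdd⟩ hS_super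
  rw [integral_indicator_one_comp (measurable_pi_lambda _ hXhat) hS,
    integral_indicator_one_comp (measurable_pi_lambda _ hX) hS, measureReal_def, measureReal_def,
    hindep.measure_preimage_univ_pi fun _ => measurableSet_Ioi] at key
  simp_rw [(hid _).measure_mem_eq measurableSet_Ioi] at key
  have hS_preimage : (fun ω i => X i ω) ⁻¹' S = {ω | ∀ i, t i < X i ω} := by ext; simp [S]
  rw [hS_preimage] at key
  exact (ENNReal.toReal_le_toReal (ENNReal.prod_ne_top fun _ _ => measure_ne_top P _)
    (measure_ne_top P _)).mp key

/-- If `X̂` has mutually independent components with `X̂ᵢ =ᵈ Xᵢ` and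
`E f(X̂) ≤ E f(X)` for every bounded measurable supermodular `f : ℝ^d → ℝ`, then `X` is
positive upper orthant dependent. -/
theorem PSD_implies_PUOD
    {Ω : Type*} [MeasurableSpace Ω] (P : Measure Ω) [IsProbabilityMeasure P]
    {Ω' : Type*} [MeasurableSpace Ω'] (P' : Measure Ω') [IsProbabilityMeasure P']
    (d : ℕ) (X : Fin d → Ω → ℝ) (hX : ∀ i, Measurable (X i))
    (Xhat : Fin d → Ω' → ℝ) (hXhat : ∀ i, Measurable (Xhat i))
    (hindep : iIndepFun Xhat P')
    (hid : ∀ i, IdentDistrib (Xhat i) (X i) P' P)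
    (PSD : ∀ f : (Fin d → ℝ) → ℝ, Measurable f → (∃ C, ∀ x, |f x| ≤ C) →
      (∀ x y, f x + f y ≤ f (x ⊓ y) + f (x ⊔ y)) →
      (∫ ω, f (fun i => Xhat i ω) ∂P') ≤ ∫ ω, f (fun i => X i ω) ∂P) :
    ∀ t : Fin d → ℝ, ∏ i, P {ω | t i < X i ω} ≤ P {ω | ∀ i, t i < X i ω} :=
  PSD_implies_PUOD_general P P' d X hX Xhat hXhat hindep hid PSD
end

section
/- Let X = (X_1,…,X_d) be a random vector on a probability space such that each X_i is square-integrable. If X is positive upper orthant dependent, then X is positively correlated: Cov(X_i, X_j) ≥ 0 for all i, j ∈ {1,…,d}. -/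
/-!
Hoeffding's covariance identity
`Cov(X, Y) = ∬ (P(X > s, Y > t) - P(X > s) P(Y > t)) ds dt`
follows from `2 Cov(X, Y) = E[(X - X')(Y - Y')]` for an independent copy `(X', Y')`, the
representation `x - x' = ∫ (𝟙{s < x} - 𝟙{s < x'}) ds` and Fubini. Sending all but two thresholds
of the PUOD inequality to `-∞` shows that the integrand is nonnegative.
-/

open MeasureTheory ProbabilityTheory Set Filter Topology

noncomputable def layerDiff (a b s : ℝ) : ℝ := (Ioi s).indicator 1 a - (Ioi s).indicator 1 b

lemma layerDiff_eq_indicator_Ico_sub (a b s : ℝ) :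
    layerDiff a b s = (Ico b a).indicator 1 s - (Ico a b).indicator 1 s := by
  simp only [layerDiff, indicator_apply, mem_Ioi, mem_Ico, Pi.one_apply]
  split_ifs <;> grind

lemma abs_layerDiff (a b s : ℝ) : |layerDiff a b s| = (Ico (min a b) (max a b)).indicator 1 s := by
  simp only [layerDiff, indicator_apply, mem_Ioi, mem_Ico, Pi.one_apply, min_le_iff, lt_max_iff]
  split_ifs <;> grind

lemma integrable_indicator_one_Ico (a b : ℝ) : Integrable ((Ico a b).indicator (1 : ℝ → ℝ)) :=
  (integrable_indicator_iff measurableSet_Ico).2 (integrableOn_const measure_Ico_lt_top.ne)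

lemma integrable_layerDiff (a b : ℝ) : Integrable (layerDiff a b) := by
  simp_rw [funext (layerDiff_eq_indicator_Ico_sub a b)]
  exact (integrable_indicator_one_Ico b a).sub (integrable_indicator_one_Ico a b)

lemma integral_layerDiff (a b : ℝ) : ∫ s, layerDiff a b s = a - b := by
  simp_rw [layerDiff_eq_indicator_Ico_sub]
  rw [integral_sub (integrable_indicator_one_Ico b a) (integrable_indicator_one_Ico a b),
    integral_indicator_one measurableSet_Ico, integral_indicator_one measurableSet_Ico,
    Real.volume_real_Ico, Real.volume_real_Ico]
  rcases le_total a b with h | h <;> simp [h]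

lemma integral_abs_layerDiff (a b : ℝ) : ∫ s, |layerDiff a b s| = |a - b| := by
  simp_rw [abs_layerDiff]
  rw [integral_indicator_one measurableSet_Ico, Real.volume_real_Ico_of_le min_le_max,
    max_sub_min_eq_abs']

@[fun_prop]
lemma Measurable.layerDiff {α : Type*} [MeasurableSpace α] {f g h : α → ℝ} (hf : Measurable f)
    (hg : Measurable g) (hh : Measurable h) : Measurable fun x => layerDiff (f x) (g x) (h x) := by
  simp only [_root_.layerDiff, indicator_apply, mem_Ioi, Pi.one_apply]
  exact (Measurable.ite (measurableSet_lt hh hf) measurable_const measurable_const).sub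
    (Measurable.ite (measurableSet_lt hh hg) measurable_const measurable_const)

section

variable {Ω : Type*} [MeasurableSpace Ω] {μ : Measure Ω} [IsProbabilityMeasure μ] {X Y : Ω → ℝ}

lemma integral_prod_sub_mul_sub (hX : MemLp X 2 μ) (hY : MemLp Y 2 μ) :
    ∫ z, (X z.1 - X z.2) * (Y z.1 - Y z.2) ∂(μ.prod μ) = 2 * cov[X, Y; μ] := by
  have hXY : Integrable (fun ω => X ω * Y ω) μ := hX.integrable_mul hY
  have hX1 := hX.integrable one_le_two
  have hY1 := hY.integrable one_le_two
  have h11 : Integrable (fun z : Ω × Ω => X z.1 * Y z.1) (μ.prod μ) := hXY.comp_fst μ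
  have h12 : Integrable (fun z : Ω × Ω => X z.1 * Y z.2) (μ.prod μ) := hX1.mul_prod hY1
  have h21 : Integrable (fun z : Ω × Ω => X z.2 * Y z.1) (μ.prod μ) := by
    simpa only [mul_comm] using hY1.mul_prod hX1
  have h22 : Integrable (fun z : Ω × Ω => X z.2 * Y z.2) (μ.prod μ) := hXY.comp_snd μ
  have expand : (fun z : Ω × Ω => (X z.1 - X z.2) * (Y z.1 - Y z.2)) =
      fun z => X z.1 * Y z.1 - X z.1 * Y z.2 - X z.2 * Y z.1 + X z.2 * Y z.2 := by
    ext z; ring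
  have cross : ∫ z, X z.2 * Y z.1 ∂(μ.prod μ) = (∫ ω, X ω ∂μ) * ∫ ω, Y ω ∂μ := by
    simp_rw [mul_comm (X _)]
    rw [integral_prod_mul Y X, mul_comm]
  rw [expand, integral_add (by exact (h11.sub h12).sub h21) h22,
    integral_sub (by exact h11.sub h12) h21, integral_sub h11 h12,
    integral_fun_fst (fun ω => X ω * Y ω),
    integral_fun_snd (fun ω => X ω * Y ω), integral_prod_mul X Y, cross,
    covariance_eq_sub hX hY]
  simp only [probReal_univ, one_smul, Pi.mul_apply]
  ring

lemma covariance_indicator_one {A B : Set Ω} (hA : MeasurableSet A) (hB : MeasurableSet B) :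
    cov[A.indicator 1, B.indicator 1; μ] = μ.real (A ∩ B) - μ.real A * μ.real B := by
  have hone : MemLp (1 : Ω → ℝ) 2 μ := memLp_const 1
  rw [covariance_eq_sub (hone.indicator hA) (hone.indicator hB),
    ← inter_indicator_one, integral_indicator_one (hA.inter hB), integral_indicator_one hA,
    integral_indicator_one hB]

lemma integrable_layerDiff_mul_layerDiff (hXm : Measurable X) (hYm : Measurable Y)
    (hX : MemLp X 2 μ) (hY : MemLp Y 2 μ) :
    Integrable (fun p : (Ω × Ω) × (ℝ × ℝ) =>
      layerDiff (X p.1.1) (X p.1.2) p.2.1 * layerDiff (Y p.1.1) (Y p.1.2) p.2.2)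
      ((μ.prod μ).prod volume) := by
  have hmeas : Measurable fun p : (Ω × Ω) × (ℝ × ℝ) =>
      layerDiff (X p.1.1) (X p.1.2) p.2.1 * layerDiff (Y p.1.1) (Y p.1.2) p.2.2 := by
    fun_prop
  refine (integrable_prod_iff hmeas.aestronglyMeasurable).2 ⟨ae_of_all _ fun z => ?_, ?_⟩
  · rw [Measure.volume_eq_prod]
    exact (integrable_layerDiff (X z.1) (X z.2)).mul_prod (integrable_layerDiff (Y z.1) (Y z.2))
  · have hnorm : ∀ z : Ω × Ω, ∫ st : ℝ × ℝ,
        ‖layerDiff (X z.1) (X z.2) st.1 * layerDiff (Y z.1) (Y z.2) st.2‖ =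
          |(X z.1 - X z.2) * (Y z.1 - Y z.2)| := fun z => by
      simp only [norm_mul, Real.norm_eq_abs]
      rw [Measure.volume_eq_prod, integral_prod_mul (fun s => |layerDiff (X z.1) (X z.2) s|)
        (fun t => |layerDiff (Y z.1) (Y z.2) t|), integral_abs_layerDiff,
        integral_abs_layerDiff, abs_mul]
    simp_rw [hnorm]
    exact (((hX.comp_fst μ).sub (hX.comp_snd μ)).integrable_mul
      ((hY.comp_fst μ).sub (hY.comp_snd μ))).abs

theorem covariance_eq_integral_measureReal_inter_sub (hXm : Measurable X) (hYm : Measurable Y)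
    (hX : MemLp X 2 μ) (hY : MemLp Y 2 μ) :
    cov[X, Y; μ] = ∫ st : ℝ × ℝ, (μ.real ({ω | st.1 < X ω} ∩ {ω | st.2 < Y ω}) -
      μ.real {ω | st.1 < X ω} * μ.real {ω | st.2 < Y ω}) := by
  have layer : ∀ z : Ω × Ω, (X z.1 - X z.2) * (Y z.1 - Y z.2) =
      ∫ st : ℝ × ℝ, layerDiff (X z.1) (X z.2) st.1 * layerDiff (Y z.1) (Y z.2) st.2 := fun z => by
    rw [Measure.volume_eq_prod, integral_prod_mul, integral_layerDiff, integral_layerDiff]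
  have indicators : ∀ st : ℝ × ℝ, ∫ z : Ω × Ω,
      layerDiff (X z.1) (X z.2) st.1 * layerDiff (Y z.1) (Y z.2) st.2 ∂(μ.prod μ) =
        2 * (μ.real ({ω | st.1 < X ω} ∩ {ω | st.2 < Y ω}) -
          μ.real {ω | st.1 < X ω} * μ.real {ω | st.2 < Y ω}) := fun st => by
    have hA : MeasurableSet {ω | st.1 < X ω} := hXm measurableSet_Ioi
    have hB : MeasurableSet {ω | st.2 < Y ω} := hYm measurableSet_Ioi
    have hone : MemLp (1 : Ω → ℝ) 2 μ := memLp_const 1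
    rw [← covariance_indicator_one hA hB,
      ← integral_prod_sub_mul_sub (hone.indicator hA) (hone.indicator hB)]
    -- `layerDiff (X ω) (X ω') s` unfolds to `𝟙{s < X} ω - 𝟙{s < X} ω'`
    rfl
  have := calc 2 * cov[X, Y; μ]
      = ∫ z, (X z.1 - X z.2) * (Y z.1 - Y z.2) ∂(μ.prod μ) :=
        (integral_prod_sub_mul_sub hX hY).symm
    _ = ∫ z, (∫ st : ℝ × ℝ, layerDiff (X z.1) (X z.2) st.1 * layerDiff (Y z.1) (Y z.2) st.2)
          ∂(μ.prod μ) := by simp_rw [layer]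
    _ = ∫ st : ℝ × ℝ, ∫ z, layerDiff (X z.1) (X z.2) st.1 * layerDiff (Y z.1) (Y z.2) st.2
          ∂(μ.prod μ) := integral_integral_swap (integrable_layerDiff_mul_layerDiff hXm hYm hX hY)
    _ = 2 * ∫ st : ℝ × ℝ, (μ.real ({ω | st.1 < X ω} ∩ {ω | st.2 < Y ω}) -
          μ.real {ω | st.1 < X ω} * μ.real {ω | st.2 < Y ω}) := by
        simp_rw [indicators, integral_const_mul]
  linarith

end

def PosUpperOrthantDependent {Ω ι : Type*} [MeasurableSpace Ω] [Fintype ι] (μ : Measure Ω)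
    (X : ι → Ω → ℝ) : Prop :=
  ∀ t : ι → ℝ, ∏ i, μ {ω | t i < X i ω} ≤ μ {ω | ∀ i, t i < X i ω}

section

variable {Ω : Type*} [MeasurableSpace Ω] {μ : Measure Ω} [IsProbabilityMeasure μ]

lemma tendsto_measureReal_neg_natCast_lt (f : Ω → ℝ) :
    Tendsto (fun n : ℕ => μ.real {ω | -(n : ℝ) < f ω}) atTop (𝓝 1) := by
  have hmono : Monotone fun n : ℕ => {ω | -(n : ℝ) < f ω} :=
    fun m n hmn ω (hω : -(m : ℝ) < f ω) => show -(n : ℝ) < f ω by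
      linarith [(Nat.cast_le (α := ℝ)).2 hmn]
  have hunion : ⋃ n : ℕ, {ω | -(n : ℝ) < f ω} = univ :=
    eq_univ_of_forall fun ω => mem_iUnion.2 <| (exists_nat_gt (-f ω)).imp fun n hn =>
      show -(n : ℝ) < f ω by linarith
  have h := tendsto_measure_iUnion_atTop (μ := μ) hmono
  rw [hunion, measure_univ] at h
  simpa [Function.comp_def, measureReal_def] using
    (ENNReal.tendsto_toReal ENNReal.one_ne_top).comp h

lemma measureReal_mul_le_measureReal_inter_of_le {f : Ω → ℝ} {s t : ℝ} :
    μ.real {ω | s < f ω} * μ.real {ω | t < f ω} ≤ μ.real ({ω | s < f ω} ∩ {ω | t < f ω}) := by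
  rcases le_total s t with h | h
  · rw [inter_eq_right.2 (ofPred_subset_ofPred.2 fun ω hω => h.trans_lt hω)]
    exact mul_le_of_le_one_left measureReal_nonneg measureReal_le_one
  · rw [inter_eq_left.2 (ofPred_subset_ofPred.2 fun ω hω => h.trans_lt hω)]
    exact mul_le_of_le_one_right measureReal_nonneg measureReal_le_one

lemma PosUpperOrthantDependent.measureReal_mul_le_measureReal_inter {ι : Type*} [Fintype ι]
    {X : ι → Ω → ℝ} (h : PosUpperOrthantDependent μ X) (i j : ι) (s t : ℝ) :
    μ.real {ω | s < X i ω} * μ.real {ω | t < X j ω}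
      ≤ μ.real ({ω | s < X i ω} ∩ {ω | t < X j ω}) := by
  classical
  rcases eq_or_ne i j with rfl | hij
  · exact measureReal_mul_le_measureReal_inter_of_le
  set τ : ℕ → ι → ℝ := fun n => Function.update (Function.update (fun _ => -(n : ℝ)) i s) j t
  have bound : ∀ n, ∏ k, μ.real {ω | τ n k < X k ω}
      ≤ μ.real ({ω | s < X i ω} ∩ {ω | t < X j ω}) := fun n => by
    simp only [measureReal_def]
    rw [← ENNReal.toReal_prod]
    refine ENNReal.toReal_mono (measure_ne_top _ _) ((h (τ n)).trans (measure_mono ?_))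
    intro ω hω
    exact ⟨by simpa [τ, hij] using hω i, by simpa [τ] using hω j⟩
  have limit : ∀ k, Tendsto (fun n => μ.real {ω | τ n k < X k ω}) atTop
      (𝓝 ((Pi.mulSingle i (μ.real {ω | s < X i ω}) : ι → ℝ) k *
        (Pi.mulSingle j (μ.real {ω | t < X j ω}) : ι → ℝ) k)) := by
    intro k
    rcases eq_or_ne k i with rfl | hki
    · simp [τ, hij]
    rcases eq_or_ne k j with rfl | hkj
    · simp [τ, hki]
    simpa [τ, hki, hkj] using tendsto_measureReal_neg_natCast_lt (μ := μ) (X k)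
  have := tendsto_finsetProd Finset.univ fun k _ => limit k
  rw [Finset.prod_mul_distrib, Fintype.prod_pi_mulSingle', Fintype.prod_pi_mulSingle'] at this
  exact le_of_tendsto' this bound

end

/-- If each component of `X` is square-integrable and `X` is positive upper
orthant dependent, then `X` is positively correlated: `Cov(Xᵢ, Xⱼ) ≥ 0` for all `i, j`. -/
theorem PUOD_implies_positively_correlated
    {Ω : Type*} [MeasurableSpace Ω] (P : Measure Ω) [IsProbabilityMeasure P]
    (d : ℕ) (X : Fin d → Ω → ℝ) (hX : ∀ i, Measurable (X i))
    (hL2 : ∀ i, MemLp (X i) 2 P)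
    (PUOD : ∀ t : Fin d → ℝ, ∏ i, P {ω | t i < X i ω} ≤ P {ω | ∀ i, t i < X i ω}) :
    ∀ i j : Fin d,
      0 ≤ (∫ ω, X i ω * X j ω ∂P) - (∫ ω, X i ω ∂P) * (∫ ω, X j ω ∂P) := by
  intro i j
  have hcov : 0 ≤ cov[X i, X j; P] := by
    rw [covariance_eq_integral_measureReal_inter_sub (hX i) (hX j) (hL2 i) (hL2 j)]
    exact integral_nonneg fun st => sub_nonneg.2 <|
      PosUpperOrthantDependent.measureReal_mul_le_measureReal_inter PUOD i j st.1 st.2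
  rwa [covariance_eq_sub (hL2 i) (hL2 j)] at hcov
end

section
/- Let X = (X_1,…,X_d) be a random vector on a probability space. Then X is positive upper orthant dependent if and only if for every choice of bounded measurable nondecreasing functions f_i : ℝ → [0,∞), i = 1,…,d, one has E(∏_{i=1}^d f_i(X_i)) ≥ ∏_{i=1}^d E f_i(X_i). -/
/-!
For `y ≥ 0`, `y = λ{s > 0 | s < y}` with `λ` the Lebesgue measure. By Tonelli, with `s` ranging
over `(0, ∞)ᵈ`,
`∏ᵢ E fᵢ(Xᵢ) = ∫ ∏ᵢ P(sᵢ < fᵢ(Xᵢ)) ds` and `E ∏ᵢ fᵢ(Xᵢ) = ∫ P(∀ i, sᵢ < fᵢ(Xᵢ)) ds`.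
As `fᵢ` is nondecreasing, `{x | sᵢ < fᵢ x}` is an upper set of `ℝ`, and positive upper orthant
dependence passes from half-lines `(t, ∞)` to upper sets by approximating each upper set by
half-lines and passing to the limit. Conversely, indicators of half-lines are admissible `fᵢ`.
-/

open MeasureTheory Filter Topology Set
open scoped ENNReal

/-- An upper set of `ℝ` is `∅`, `ℝ`, `Ioi a` or `Ici a`, approached by thresholds along
`atTop`, `atBot`, `pure a` and `𝓝[<] a` respectively. -/
theorem IsUpperSet.exists_seq_eventually_lt_iff_mem {U : Set ℝ} (hU : IsUpperSet U) :
    ∃ u : ℕ → ℝ, ∀ x, ∀ᶠ n in atTop, u n < x ↔ x ∈ U := by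
  suffices ∃ (L : Filter ℝ) (_ : L.NeBot) (_ : L.IsCountablyGenerated),
      ∀ x, ∀ᶠ t in L, t < x ↔ x ∈ U by
    obtain ⟨L, _, _, hL⟩ := this
    obtain ⟨u, hu⟩ := exists_seq_tendsto L
    exact ⟨u, fun x => hu.eventually (hL x)⟩
  rcases U.eq_empty_or_nonempty with rfl | hne
  · exact ⟨atTop, inferInstance, inferInstance,
      fun x => (eventually_ge_atTop x).mono fun t ht => by simpa using ht⟩
  by_cases hbdd : BddBelow U
  swap
  · refine ⟨atBot, inferInstance, inferInstance,
      fun x => (eventually_lt_atBot x).mono fun t ht => iff_of_true ht ?_⟩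
    obtain ⟨y, hyU, hyx⟩ := not_bddBelow_iff.1 hbdd x
    exact hU hyx.le hyU
  by_cases ha : sInf U ∈ U
  · have hmem : ∀ x, x ∈ U ↔ sInf U ≤ x := fun x => ⟨csInf_le hbdd, fun h => hU h ha⟩
    refine ⟨𝓝[<] sInf U, inferInstance, inferInstance, fun x => ?_⟩
    rcases le_or_gt (sInf U) x with h | h
    · filter_upwards [self_mem_nhdsWithin] with t ht
      exact iff_of_true ((mem_Iio.1 ht).trans_le h) ((hmem x).2 h)
    · filter_upwards [Ioo_mem_nhdsLT h] with t ht
      exact iff_of_false (not_lt.2 ht.1.le) fun hx => ((hmem x).1 hx).not_gt h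
  · refine ⟨pure (sInf U), inferInstance, inferInstance,
      fun x => eventually_pure.2 ⟨fun h => ?_, fun hx => ?_⟩⟩
    · obtain ⟨y, hyU, hyx⟩ := exists_lt_of_csInf_lt hne h
      exact hU hyx.le hyU
    · exact (csInf_le hbdd hx).lt_of_ne fun h => ha (h ▸ hx)

theorem lintegral_fin_nat_prod_eq_prod {n : ℕ} {E : Type*} [MeasurableSpace E]
    {μ : Fin n → Measure E} [∀ i, SigmaFinite (μ i)]
    {f : Fin n → E → ℝ≥0∞} (hf : ∀ i, Measurable (f i)) :
    ∫⁻ x, ∏ i, f i (x i) ∂Measure.pi μ = ∏ i, ∫⁻ x, f i x ∂μ i := by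
  induction n with
  | zero => simp
  | succ n ih =>
    calc ∫⁻ x, ∏ i, f i (x i) ∂Measure.pi μ
        = ∫⁻ x : E × (Fin n → E), f 0 x.1 * ∏ i : Fin n, f i.succ (x.2 i)
            ∂(μ 0).prod (Measure.pi fun i => μ i.succ) := by
          rw [← (measurePreserving_piFinSuccAbove μ 0).symm.lintegral_comp_emb
            (MeasurableEquiv.measurableEmbedding _)]
          simp [MeasurableEquiv.piFinSuccAbove_symm_apply, Fin.insertNthEquiv,
            Fin.prod_univ_succ]
      _ = (∫⁻ x, f 0 x ∂μ 0) * ∫⁻ y, ∏ i : Fin n, f i.succ (y i) ∂Measure.pi fun i => μ i.succ :=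
          lintegral_prod_mul (hf 0).aemeasurable (Finset.measurable_prod _
            fun (i : Fin n) _ => (hf i.succ).comp (measurable_pi_apply i)).aemeasurable
      _ = ∏ i, ∫⁻ x, f i x ∂μ i := by rw [ih fun i => hf i.succ, Fin.prod_univ_succ]

theorem ofReal_eq_volume_restrict_Ioi_zero_Iio (y : ℝ) :
    ENNReal.ofReal y = volume.restrict (Ioi 0) (Iio y) := by
  rw [Measure.restrict_apply measurableSet_Iio, Iio_inter_Ioi, Real.volume_Ioo, sub_zero]

theorem lintegral_measure_prodMk_comm {α β : Type*} [MeasurableSpace α] [MeasurableSpace β]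
    {μ : Measure α} {ν : Measure β} [SFinite μ] [SFinite ν] {S : Set (α × β)}
    (hS : MeasurableSet S) :
    ∫⁻ a, ν {b | (a, b) ∈ S} ∂μ = ∫⁻ b, μ {a | (a, b) ∈ S} ∂ν :=
  (Measure.prod_apply hS).symm.trans (Measure.prod_apply_symm hS)

section LayerCake

variable {Ω : Type*} [MeasurableSpace Ω] {P : Measure Ω} [SFinite P]

theorem lintegral_ofReal_eq_lintegral_measure_lt {g : Ω → ℝ} (hg : Measurable g) :
    ∫⁻ ω, ENNReal.ofReal (g ω) ∂P = ∫⁻ s in Ioi 0, P {ω | s < g ω} := by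
  simp_rw [ofReal_eq_volume_restrict_Ioi_zero_Iio]
  exact lintegral_measure_prodMk_comm (S := {p | p.2 < g p.1})
    (measurableSet_lt measurable_snd (hg.comp measurable_fst))

theorem lintegral_prod_ofReal_eq_lintegral_measure_forall_lt {ι : Type*} [Fintype ι]
    {g : ι → Ω → ℝ} (hg : ∀ i, Measurable (g i)) :
    ∫⁻ ω, ∏ i, ENNReal.ofReal (g i ω) ∂P
      = ∫⁻ s, P {ω | ∀ i, s i < g i ω} ∂Measure.pi fun _ => volume.restrict (Ioi 0) := by
  have hbox : ∀ ω, univ.pi (fun i => Iio (g i ω)) = {s | ∀ i, s i < g i ω} := fun ω => by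
    ext; simp
  simp_rw [ofReal_eq_volume_restrict_Ioi_zero_Iio, ← Measure.pi_pi, hbox]
  exact lintegral_measure_prodMk_comm (S := {p : Ω × (ι → ℝ) | ∀ i, p.2 i < g i p.1})
    (measurableSet_setOfPred.2 (by fun_prop))

end LayerCake

def IsPUOD {Ω ι : Type*} [MeasurableSpace Ω] [Fintype ι] (P : Measure Ω) (X : ι → Ω → ℝ) :
    Prop :=
  ∀ t : ι → ℝ, ∏ i, P {ω | t i < X i ω} ≤ P {ω | ∀ i, t i < X i ω}

section PUOD

variable {Ω : Type*} [MeasurableSpace Ω] {P : Measure Ω} [IsFiniteMeasure P]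

theorem IsPUOD.prod_measure_le_of_isUpperSet {ι : Type*} [Fintype ι] {X : ι → Ω → ℝ}
    (hP : IsPUOD P X) (hX : ∀ i, Measurable (X i)) {U : ι → Set ℝ}
    (hU : ∀ i, IsUpperSet (U i)) :
    ∏ i, P {ω | X i ω ∈ U i} ≤ P {ω | ∀ i, X i ω ∈ U i} := by
  choose u hu using fun i => (hU i).exists_seq_eventually_lt_iff_mem
  have hlim_prod : Tendsto (fun n => ∏ i, P {ω | u i n < X i ω}) atTop
      (𝓝 (∏ i, P {ω | X i ω ∈ U i})) :=
    ENNReal.tendsto_finsetProd_of_ne_top _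
      (fun i _ => tendsto_measure_of_tendsto_indicator_of_isFiniteMeasure _ _
        (fun n => measurableSet_lt measurable_const (hX i)) fun ω => hu i (X i ω))
      fun i _ => measure_ne_top _ _
  have hlim_inter : Tendsto (fun n => P {ω | ∀ i, u i n < X i ω}) atTop
      (𝓝 (P {ω | ∀ i, X i ω ∈ U i})) :=
    tendsto_measure_of_tendsto_indicator_of_isFiniteMeasure _ _
      (fun n => measurableSet_setOfPred.2 (by fun_prop)) fun ω =>
      (eventually_all.2 fun i => hu i (X i ω)).mono fun n hn => forall_congr' hn
  exact le_of_tendsto_of_tendsto' hlim_prod hlim_inter fun n => hP fun i => u i n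

variable {n : ℕ} {X : Fin n → Ω → ℝ} {f : Fin n → ℝ → ℝ}

theorem IsPUOD.prod_lintegral_le (hP : IsPUOD P X) (hX : ∀ i, Measurable (X i))
    (hf : ∀ i, Measurable (f i)) (hf_mono : ∀ i, Monotone (f i)) :
    ∏ i, ∫⁻ ω, ENNReal.ofReal (f i (X i ω)) ∂P ≤ ∫⁻ ω, ∏ i, ENNReal.ofReal (f i (X i ω)) ∂P := by
  have hfX : ∀ i, Measurable fun ω => f i (X i ω) := fun i => (hf i).comp (hX i)
  have hanti : ∀ i, Antitone fun s => P {ω | s < f i (X i ω)} :=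
    fun i s s' hss' => measure_mono fun ω hω => hss'.trans_lt hω
  simp_rw [lintegral_ofReal_eq_lintegral_measure_lt (hfX _),
    lintegral_prod_ofReal_eq_lintegral_measure_forall_lt hfX]
  rw [← lintegral_fin_nat_prod_eq_prod fun i => (hanti i).measurable]
  exact lintegral_mono fun s => hP.prod_measure_le_of_isUpperSet hX
    (U := fun i => {x | s i < f i x}) fun i _ _ hxy hx => lt_of_lt_of_le hx (hf_mono i hxy)

theorem IsPUOD.prod_integral_le (hP : IsPUOD P X) (hX : ∀ i, Measurable (X i))
    (hf : ∀ i, Measurable (f i)) (hf_mono : ∀ i, Monotone (f i))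
    (hf_bdd : ∀ i, ∃ C, ∀ x, |f i x| ≤ C) (hf_nonneg : ∀ i x, 0 ≤ f i x) :
    ∏ i, ∫ ω, f i (X i ω) ∂P ≤ ∫ ω, ∏ i, f i (X i ω) ∂P := by
  have hfX : ∀ i, Measurable fun ω => f i (X i ω) := fun i => (hf i).comp (hX i)
  choose C hC using hf_bdd
  -- `toReal` turns `∞` into `0`, so the comparison needs the right side finite.
  have hfin : ∫⁻ ω, ∏ i, ENNReal.ofReal (f i (X i ω)) ∂P ≠ ∞ := by
    refine ne_top_of_le_ne_top (b := ∫⁻ _, ∏ i, ENNReal.ofReal (C i) ∂P) ?_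
      (lintegral_mono fun ω => Finset.prod_le_prod' fun i _ =>
        ENNReal.ofReal_le_ofReal ((le_abs_self _).trans (hC i _)))
    rw [lintegral_const]
    exact ENNReal.mul_ne_top (ENNReal.prod_ne_top fun i _ => ENNReal.ofReal_ne_top)
      (measure_ne_top _ _)
  rw [integral_eq_lintegral_of_nonneg_ae
      (ae_of_all _ fun ω => Finset.prod_nonneg fun i _ => hf_nonneg _ _)
      (Finset.measurable_prod _ fun i _ => hfX i).aestronglyMeasurable]
  simp_rw [integral_eq_lintegral_of_nonneg_ae (ae_of_all _ fun ω => hf_nonneg _ _)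
      (hfX _).aestronglyMeasurable, ← ENNReal.toReal_prod,
    ENNReal.ofReal_prod_of_nonneg fun i _ => hf_nonneg _ _]
  exact ENNReal.toReal_mono hfin (hP.prod_lintegral_le hX hf hf_mono)

theorem isPUOD_of_prod_integral_indicator_le {ι : Type*} [Fintype ι] {X : ι → Ω → ℝ}
    (hX : ∀ i, Measurable (X i))
    (h : ∀ t : ι → ℝ, ∏ i, ∫ ω, (Ioi (t i)).indicator (1 : ℝ → ℝ) (X i ω) ∂P
      ≤ ∫ ω, ∏ i, (Ioi (t i)).indicator 1 (X i ω) ∂P) :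
    IsPUOD P X := by
  intro t
  have hone : ∀ i, (fun ω => (Ioi (t i)).indicator (1 : ℝ → ℝ) (X i ω))
      = {ω | t i < X i ω}.indicator 1 := fun i => by ext ω; simp [indicator_apply]
  have hprod : (fun ω => ∏ i, (Ioi (t i)).indicator (1 : ℝ → ℝ) (X i ω))
      = {ω | ∀ i, t i < X i ω}.indicator 1 := by
    ext ω; simp [indicator_apply, Fintype.prod_boole]
  have hmeas : ∀ i, MeasurableSet {ω | t i < X i ω} :=
    fun i => measurableSet_lt measurable_const (hX i)
  have hmeas_all : MeasurableSet {ω | ∀ i, t i < X i ω} := measurableSet_setOfPred.2 (by fun_prop)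
  have key := h t
  simp only [hone, hprod, integral_indicator_one (hmeas _), integral_indicator_one hmeas_all,
    measureReal_def, ← ENNReal.toReal_prod] at key
  exact (ENNReal.toReal_le_toReal (ENNReal.prod_ne_top fun i _ => measure_ne_top _ _)
    (measure_ne_top _ _)).1 key

end PUOD

/-- `X` is positive upper orthant dependent if and only if for all bounded
measurable nondecreasing nonnegative `fᵢ : ℝ → ℝ`,
`E (∏ᵢ fᵢ(Xᵢ)) ≥ ∏ᵢ E fᵢ(Xᵢ)`. -/
theorem PUOD_iff_product_of_nondecreasing
    {Ω : Type*} [MeasurableSpace Ω] (P : Measure Ω) [IsProbabilityMeasure P]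
    (d : ℕ) (X : Fin d → Ω → ℝ) (hX : ∀ i, Measurable (X i)) :
    (∀ t : Fin d → ℝ, ∏ i, P {ω | t i < X i ω} ≤ P {ω | ∀ i, t i < X i ω}) ↔
      (∀ f : Fin d → ℝ → ℝ, (∀ i, Measurable (f i)) → (∀ i, Monotone (f i)) →
        (∀ i, ∃ C, ∀ x, |f i x| ≤ C) → (∀ i x, 0 ≤ f i x) →
        ∏ i, ∫ ω, f i (X i ω) ∂P ≤ ∫ ω, ∏ i, f i (X i ω) ∂P) := by
  refine ⟨fun hP f hf hf_mono hf_bdd hf_nonneg =>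
    IsPUOD.prod_integral_le hP hX hf hf_mono hf_bdd hf_nonneg, fun h => ?_⟩
  have hone_nonneg : ∀ (c x : ℝ), 0 ≤ (Ioi c).indicator (1 : ℝ → ℝ) x :=
    fun _ => indicator_nonneg fun _ _ => zero_le_one
  refine isPUOD_of_prod_integral_indicator_le hX fun t => h _
    (fun i => measurable_one.indicator measurableSet_Ioi) (fun i a b hab => ?_)
    (fun i => ⟨1, fun x => ?_⟩) fun i => hone_nonneg (t i)
  · exact indicator_apply_le'
      (fun ha => (indicator_of_mem (mem_Ioi.2 (lt_of_lt_of_le ha hab)) 1).ge)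
      fun _ => hone_nonneg (t i) b
  · by_cases hx : x ∈ Ioi (t i) <;> simp [hx]
end

section
/- Let X = (X_1,…,X_d) be a random vector on a probability space. Then X is positive lower orthant dependent if and only if for every choice of bounded measurable nonincreasing functions f_i : ℝ → [0,∞), i = 1,…,d, one has E(∏_{i=1}^d f_i(X_i)) ≥ ∏_{i=1}^d E f_i(X_i). -/
/-!
Every nonempty lower set of `ℝ` is an increasing union of half-lines `(-∞, t]`, so by
continuity of `P` from below the orthant inequality extends to `∏ P(Xᵢ ∈ Aᵢ) ≤ P(∀ i, Xᵢ ∈ Aᵢ)`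
for lower sets `Aᵢ`. A nonincreasing `fⱼ ≥ 0` is the integral over `t > 0` of the indicators of
its superlevel sets `{fⱼ > t}`, which are lower sets; by the layer-cake formula (applied to `P`
and to `P` weighted by the other factors) the inequality passes from these indicators to `fⱼ`,
one coordinate at a time. Conversely, indicators of half-lines are admissible test functions.
-/

open MeasureTheory Set Filter Topology Function
open scoped ENNReal

theorem IsLowerSet.exists_monotone_iUnion_Iic_eq {α : Type*} [TopologicalSpace α]
    [LinearOrder α] [OrderTopology α] [SecondCountableTopology α] {A : Set α}
    (hA : IsLowerSet A) (hne : A.Nonempty) : ∃ t : ℕ → α, Monotone t ∧ ⋃ n, Iic (t n) = A := by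
  have := hA.ordConnected
  have := hne.to_subtype
  obtain ⟨u, hu_mono, hu⟩ := exists_seq_monotone_tendsto_atTop_atTop A
  refine ⟨fun n => u n, fun m n hmn => hu_mono hmn, ?_⟩
  ext x
  simp only [mem_iUnion, mem_Iic]
  exact ⟨fun ⟨n, hn⟩ => hA hn (u n).2,
    fun hx => (hu.eventually (eventually_ge_atTop ⟨x, hx⟩)).exists⟩

theorem IsLowerSet.antitone_indicator_one {α : Type*} [Preorder α] {A : Set α}
    (hA : IsLowerSet A) : Antitone (A.indicator (1 : α → ℝ)) := by
  intro x y hxy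
  by_cases hy : y ∈ A
  · simp [hy, hA hxy hy]
  · simp [hy, indicator_nonneg]

theorem abs_indicator_one_le {α : Type*} (A : Set α) (x : α) :
    |A.indicator (1 : α → ℝ) x| ≤ 1 := by
  by_cases hx : x ∈ A <;> simp [hx]

theorem ENNReal.ofReal_indicator_one_comp {α β : Type*} (A : Set α) (Y : β → α) (b : β) :
    ENNReal.ofReal (A.indicator 1 (Y b)) = (Y ⁻¹' A).indicator 1 b := by
  by_cases h : Y b ∈ A <;> simp [h]

theorem Fintype.prod_apply_update_eq_mul_prod_erase {ι α M : Type*} [Fintype ι]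
    [DecidableEq ι] [CommMonoid M] (φ : ι → α → M) (f : ι → α) (j : ι) (a : α) :
    ∏ i, φ i (update f j a i) = φ j a * ∏ i ∈ Finset.univ.erase j, φ i (f i) := by
  rw [← Finset.mul_prod_erase _ _ (Finset.mem_univ j), update_self]
  congr 1
  exact Finset.prod_congr rfl fun i hi => by rw [update_of_ne (Finset.ne_of_mem_erase hi)]

theorem lintegral_ofReal_mul_const_le_of_superlevelSets {Ω : Type*} [MeasurableSpace Ω]
    {μ : Measure Ω} {F : Ω → ℝ} (hF : Measurable F) (hF0 : ∀ ω, 0 ≤ F ω) {R : Ω → ℝ≥0∞}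
    (hR : Measurable R) {c : ℝ≥0∞}
    (h : ∀ t, μ {ω | t < F ω} * c ≤ ∫⁻ ω in {ω | t < F ω}, R ω ∂μ) :
    (∫⁻ ω, ENNReal.ofReal (F ω) ∂μ) * c ≤ ∫⁻ ω, ENNReal.ofReal (F ω) * R ω ∂μ := by
  have h_anti : Antitone fun t => μ {ω | t < F ω} :=
    fun s t hst => measure_mono fun ω hω => lt_of_le_of_lt hst hω
  calc (∫⁻ ω, ENNReal.ofReal (F ω) ∂μ) * c
      = (∫⁻ t in Ioi 0, μ {ω | t < F ω}) * c := by
        rw [lintegral_eq_lintegral_meas_lt μ (.of_forall hF0) hF.aemeasurable]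
    _ = ∫⁻ t in Ioi 0, μ {ω | t < F ω} * c := (lintegral_mul_const c h_anti.measurable).symm
    _ ≤ ∫⁻ t in Ioi 0, μ.withDensity R {ω | t < F ω} := by
        refine lintegral_mono fun t => ?_
        rw [withDensity_apply R (measurableSet_lt measurable_const hF)]
        exact h t
    _ = ∫⁻ ω, ENNReal.ofReal (F ω) ∂μ.withDensity R :=
        (lintegral_eq_lintegral_meas_lt _ (.of_forall hF0) hF.aemeasurable).symm
    _ = ∫⁻ ω, ENNReal.ofReal (F ω) * R ω ∂μ := by
        rw [lintegral_withDensity_eq_lintegral_mul _ hR hF.ennreal_ofReal]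
        simp only [Pi.mul_apply, mul_comm]

def PositiveLowerOrthantDependent {Ω ι : Type*} [MeasurableSpace Ω] [Fintype ι]
    (P : Measure Ω) (X : ι → Ω → ℝ) : Prop :=
  ∀ t : ι → ℝ, ∏ i, P {ω | X i ω ≤ t i} ≤ P {ω | ∀ i, X i ω ≤ t i}

section Orthant

variable {Ω ι : Type*} [MeasurableSpace Ω] [Fintype ι] {P : Measure Ω} {X : ι → Ω → ℝ}

theorem prod_measure_le_iff_prod_integral_indicator_le [IsFiniteMeasure P]
    (hX : ∀ i, Measurable (X i)) {A : ι → Set ℝ} (hA : ∀ i, MeasurableSet (A i)) :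
    ∏ i, P (X i ⁻¹' A i) ≤ P (⋂ i, X i ⁻¹' A i) ↔
      ∏ i, ∫ ω, (A i).indicator (1 : ℝ → ℝ) (X i ω) ∂P ≤
        ∫ ω, ∏ i, (A i).indicator (1 : ℝ → ℝ) (X i ω) ∂P := by
  have hmeasX (i : ι) : MeasurableSet (X i ⁻¹' A i) := (hA i).preimage (hX i)
  simp only [← indicator_comp_right, Pi.one_comp, prod_indicator_apply, Finset.prod_const_one,
    Finset.mem_univ, iInter_true, integral_indicator_one, hmeasX, MeasurableSet.iInter hmeasX,
    measureReal_def, ← ENNReal.toReal_prod]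
  exact (ENNReal.toReal_le_toReal (ENNReal.prod_ne_top fun i _ => measure_ne_top _ _)
    (measure_ne_top _ _)).symm

theorem prod_lintegral_le_of_forall_update_indicator [DecidableEq ι]
    (hX : ∀ i, Measurable (X i)) {f : ι → ℝ → ℝ} (hf : ∀ i, Measurable (f i)) {j : ι}
    (hfj : Antitone (f j)) (hfj0 : 0 ≤ f j)
    (h : ∀ A : Set ℝ, IsLowerSet A →
      ∏ i, ∫⁻ ω, ENNReal.ofReal (update f j (A.indicator 1) i (X i ω)) ∂P ≤
        ∫⁻ ω, ∏ i, ENNReal.ofReal (update f j (A.indicator 1) i (X i ω)) ∂P) :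
    ∏ i, ∫⁻ ω, ENNReal.ofReal (f i (X i ω)) ∂P ≤
      ∫⁻ ω, ∏ i, ENNReal.ofReal (f i (X i ω)) ∂P := by
  have split_left (g : ℝ → ℝ) := Fintype.prod_apply_update_eq_mul_prod_erase
    (fun i (g : ℝ → ℝ) => ∫⁻ ω, ENNReal.ofReal (g (X i ω)) ∂P) f j g
  have split_right (g : ℝ → ℝ) (ω : Ω) := Fintype.prod_apply_update_eq_mul_prod_erase
    (fun i (g : ℝ → ℝ) => ENNReal.ofReal (g (X i ω))) f j g
  have split_f := split_left (f j)
  have split_f' (ω : Ω) := split_right (f j) ω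
  simp only [update_eq_self] at split_f split_f'
  rw [split_f, lintegral_congr split_f']
  refine lintegral_ofReal_mul_const_le_of_superlevelSets ?_ (fun ω => hfj0 (X j ω)) ?_
    fun t => ?_
  · exact (hf j).comp (hX j)
  · exact Finset.measurable_prod _ fun i _ => ((hf i).comp (hX i)).ennreal_ofReal
  have hA : IsLowerSet {x | t < f j x} := fun x y hyx hx => hx.trans_le (hfj hyx)
  have hmeas : MeasurableSet (X j ⁻¹' {x | t < f j x}) :=
    hA.ordConnected.measurableSet.preimage (hX j)
  have h_layer := h _ hA
  rw [split_left] at h_layer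
  simp only [split_right, ENNReal.ofReal_indicator_one_comp, lintegral_indicator_one hmeas]
    at h_layer
  simp only [preimage_ofPred_eq] at h_layer hmeas
  refine h_layer.trans_eq ?_
  rw [← lintegral_indicator hmeas]
  congr with ω
  by_cases hω : t < f j (X j ω) <;> simp [hω]

namespace PositiveLowerOrthantDependent

theorem prod_measure_le_of_isLowerSet [IsFiniteMeasure P]
    (h : PositiveLowerOrthantDependent P X) {A : ι → Set ℝ} (hA : ∀ i, IsLowerSet (A i)) :
    ∏ i, P (X i ⁻¹' A i) ≤ P (⋂ i, X i ⁻¹' A i) := by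
  by_cases hne : ∀ i, (A i).Nonempty
  · choose t ht_mono ht using fun i => (hA i).exists_monotone_iUnion_Iic_eq (hne i)
    have h_coord (i : ι) :
        Tendsto (fun n => P {ω | X i ω ≤ t i n}) atTop (𝓝 (P (X i ⁻¹' A i))) := by
      rw [← ht i, preimage_iUnion]
      exact tendsto_measure_iUnion_atTop fun m n hmn =>
        preimage_mono (Iic_subset_Iic.2 (ht_mono i hmn))
    have h_joint : Tendsto (fun n => P {ω | ∀ i, X i ω ≤ t i n}) atTop
        (𝓝 (P (⋂ i, X i ⁻¹' A i))) := by
      have hunion : ⋂ i, X i ⁻¹' A i = ⋃ n, {ω | ∀ i, X i ω ≤ t i n} := by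
        ext ω
        simp only [← ht, mem_iInter, mem_preimage, mem_iUnion, mem_Iic, mem_ofPred_eq]
        refine ⟨fun hω => ?_, fun ⟨n, hn⟩ i => ⟨n, hn i⟩⟩
        refine (eventually_all.2 fun i => ?_ : ∀ᶠ n in atTop, ∀ i, X i ω ≤ t i n).exists
        obtain ⟨n, hn⟩ := hω i
        exact eventually_atTop.2 ⟨n, fun m hm => hn.trans (ht_mono i hm)⟩
      rw [hunion]
      exact tendsto_measure_iUnion_atTop fun m n hmn ω hω i => (hω i).trans (ht_mono i hmn)
    exact le_of_tendsto_of_tendsto'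
      (ENNReal.tendsto_finsetProd_of_ne_top _ (fun i _ => h_coord i)
        fun i _ => measure_ne_top _ _)
      h_joint fun n => h fun i => t i n
  · push Not at hne
    obtain ⟨i, hi⟩ := hne
    rw [Finset.prod_eq_zero (Finset.mem_univ i) (by simp [hi])]
    exact zero_le

theorem prod_lintegral_indicator_le [IsFiniteMeasure P] (h : PositiveLowerOrthantDependent P X)
    (hX : ∀ i, Measurable (X i)) {A : ι → Set ℝ} (hA : ∀ i, IsLowerSet (A i)) :
    ∏ i, ∫⁻ ω, ENNReal.ofReal ((A i).indicator 1 (X i ω)) ∂P ≤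
      ∫⁻ ω, ∏ i, ENNReal.ofReal ((A i).indicator 1 (X i ω)) ∂P := by
  have hmeasX (i : ι) : MeasurableSet (X i ⁻¹' A i) :=
    (hA i).ordConnected.measurableSet.preimage (hX i)
  simp only [ENNReal.ofReal_indicator_one_comp, lintegral_indicator_one, hmeasX,
    prod_indicator_apply, Finset.prod_const_one, Finset.mem_univ, iInter_true]
  rw [lintegral_indicator_one (MeasurableSet.iInter hmeasX)]
  exact h.prod_measure_le_of_isLowerSet hA

theorem prod_lintegral_le_lintegral_prod [IsFiniteMeasure P]
    (h : PositiveLowerOrthantDependent P X) (hX : ∀ i, Measurable (X i)) {f : ι → ℝ → ℝ}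
    (hf : ∀ i, Antitone (f i)) (hf0 : ∀ i, 0 ≤ f i) :
    ∏ i, ∫⁻ ω, ENNReal.ofReal (f i (X i ω)) ∂P ≤
      ∫⁻ ω, ∏ i, ENNReal.ofReal (f i (X i ω)) ∂P := by
  classical
  suffices key : ∀ S : Finset ι, ∀ f : ι → ℝ → ℝ, (∀ i ∈ S, Antitone (f i) ∧ 0 ≤ f i) →
      (∀ i ∉ S, ∃ A, IsLowerSet A ∧ f i = A.indicator 1) →
      ∏ i, ∫⁻ ω, ENNReal.ofReal (f i (X i ω)) ∂P ≤
        ∫⁻ ω, ∏ i, ENNReal.ofReal (f i (X i ω)) ∂P from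
    key Finset.univ f (fun i _ => ⟨hf i, hf0 i⟩) fun i hi => absurd (Finset.mem_univ i) hi
  intro S
  induction S using Finset.induction_on with
  | empty =>
    intro f _ hind
    choose A hA hfA using fun i => hind i (Finset.notMem_empty i)
    simp only [hfA]
    exact h.prod_lintegral_indicator_le hX hA
  | insert j S hj ih =>
    intro f hS hind
    have hmeas (i : ι) : Measurable (f i) := by
      by_cases hi : i ∈ insert j S
      · exact (hS i hi).1.measurable
      · obtain ⟨A, hA, hfA⟩ := hind i hi
        exact hfA ▸ measurable_one.indicator hA.ordConnected.measurableSet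
    obtain ⟨hfj, hfj0⟩ := hS j (Finset.mem_insert_self j S)
    refine prod_lintegral_le_of_forall_update_indicator hX hmeas hfj hfj0 fun A hA =>
      ih _ (fun i hi => ?_) fun i hi => ?_
    · rw [update_of_ne (ne_of_mem_of_not_mem hi hj)]
      exact hS i (Finset.mem_insert_of_mem hi)
    · rcases eq_or_ne i j with rfl | hij
      · exact ⟨A, hA, update_self ..⟩
      · rw [update_of_ne hij]
        exact hind i (by simp [hij, hi])

theorem prod_integral_le_integral_prod [IsFiniteMeasure P]
    (h : PositiveLowerOrthantDependent P X) (hX : ∀ i, Measurable (X i)) {f : ι → ℝ → ℝ}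
    (hf : ∀ i, Antitone (f i)) (hf0 : ∀ i, 0 ≤ f i) (hbdd : ∀ i, ∃ C, ∀ x, |f i x| ≤ C) :
    ∏ i, ∫ ω, f i (X i ω) ∂P ≤ ∫ ω, ∏ i, f i (X i ω) ∂P := by
  choose C hC using hbdd
  have hmeas (i : ι) : Measurable fun ω => f i (X i ω) := (hf i).measurable.comp (hX i)
  have hfin : ∫⁻ ω, ∏ i, ENNReal.ofReal (f i (X i ω)) ∂P ≠ ∞ := by
    refine (IsFiniteMeasure.lintegral_lt_top_of_bounded_to_ennreal P
      ⟨∏ i, (C i).toNNReal, fun ω => ?_⟩).ne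
    rw [ENNReal.ofNNReal_finsetProd]
    exact Finset.prod_le_prod' fun i _ =>
      ENNReal.ofReal_le_ofReal ((le_abs_self _).trans (hC i _))
  have hcoord (i : ι) :
      ∫ ω, f i (X i ω) ∂P = (∫⁻ ω, ENNReal.ofReal (f i (X i ω)) ∂P).toReal :=
    integral_eq_lintegral_of_nonneg_ae (.of_forall fun ω => hf0 i _)
      (hmeas i).aestronglyMeasurable
  have hprod : ∫ ω, ∏ i, f i (X i ω) ∂P =
      (∫⁻ ω, ∏ i, ENNReal.ofReal (f i (X i ω)) ∂P).toReal := by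
    rw [integral_eq_lintegral_of_nonneg_ae
      (.of_forall fun ω => Finset.prod_nonneg fun i _ => hf0 i _)
      (Finset.measurable_prod _ fun i _ => hmeas i).aestronglyMeasurable]
    simp_rw [ENNReal.ofReal_prod_of_nonneg fun i _ => hf0 i _]
  rw [hprod, Finset.prod_congr rfl fun i _ => hcoord i, ← ENNReal.toReal_prod]
  exact ENNReal.toReal_mono hfin (h.prod_lintegral_le_lintegral_prod hX hf hf0)

end PositiveLowerOrthantDependent

end Orthant

/-- `X` is positive lower orthant dependent if and only if for all bounded
measurable nonincreasing nonnegative `fᵢ : ℝ → ℝ`,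
`E (∏ᵢ fᵢ(Xᵢ)) ≥ ∏ᵢ E fᵢ(Xᵢ)`. -/
theorem PLOD_iff_product_of_nonincreasing
    {Ω : Type*} [MeasurableSpace Ω] (P : Measure Ω) [IsProbabilityMeasure P]
    (d : ℕ) (X : Fin d → Ω → ℝ) (hX : ∀ i, Measurable (X i)) :
    (∀ t : Fin d → ℝ, ∏ i, P {ω | X i ω ≤ t i} ≤ P {ω | ∀ i, X i ω ≤ t i}) ↔
      (∀ f : Fin d → ℝ → ℝ, (∀ i, Measurable (f i)) → (∀ i, Antitone (f i)) →
        (∀ i, ∃ C, ∀ x, |f i x| ≤ C) → (∀ i x, 0 ≤ f i x) →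
        ∏ i, ∫ ω, f i (X i ω) ∂P ≤ ∫ ω, ∏ i, f i (X i ω) ∂P) := by
  constructor
  · intro h f _ hf hbdd hf0
    exact PositiveLowerOrthantDependent.prod_integral_le_integral_prod h hX hf hf0 hbdd
  · intro h t
    have h_Iic := h (fun i => (Iic (t i)).indicator 1)
      (fun i => measurable_one.indicator measurableSet_Iic)
      (fun i => (isLowerSet_Iic (t i)).antitone_indicator_one)
      (fun i => ⟨1, abs_indicator_one_le _⟩)
      (fun i => indicator_nonneg fun _ _ => zero_le_one)
    rw [← prod_measure_le_iff_prod_integral_indicator_le hX fun i => measurableSet_Iic] at h_Iic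
    rwa [ofPred_forall]
end

section
/- Let ν be a Lévy measure on ℝ², i.e. a Borel measure with ν({0}) = 0 and ∫_{ℝ²} min(1, |y|²) ν(dy) < ∞, and fix x ∈ ℝ². Suppose that for all bounded infinitely differentiable componentwise nondecreasing functions f, g : ℝ² → ℝ with bounded partial derivatives, ∫_{ℝ²} (f(x+y) − f(x))(g(x+y) − g(x)) ν(dy) ≥ 0. Then ν is concentrated on the union of the positive and negative orthants: ν({y ∈ ℝ² : y₁ > 0, y₂ < 0}) = 0 and ν({y ∈ ℝ² : y₁ < 0, y₂ > 0}) = 0, i.e. ν((ℝ_+² ∪ ℝ_-²)^c) = 0. -/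
open MeasureTheory Real Filter

namespace Statement13Aux

noncomputable def sig (t : ℝ) : ℝ := (1 + Real.exp (-t))⁻¹

lemma sig_denom_pos (t : ℝ) : 0 < 1 + Real.exp (-t) := by positivity

lemma sig_nonneg (t : ℝ) : 0 ≤ sig t := le_of_lt (inv_pos.2 (sig_denom_pos t))

lemma sig_le_one (t : ℝ) : sig t ≤ 1 := by
  rw [sig]
  rw [inv_le_one_iff₀]
  right
  linarith [Real.exp_pos (-t)]

lemma sig_abs_le_one (t : ℝ) : |sig t| ≤ 1 :=
  abs_le.2 ⟨by linarith [sig_nonneg t], sig_le_one t⟩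

lemma sig_mono : Monotone sig := by
  intro a b hab
  rw [sig, sig]
  apply inv_anti₀ (sig_denom_pos b)
  have : Real.exp (-b) ≤ Real.exp (-a) := Real.exp_le_exp.2 (by linarith)
  linarith

lemma sig_contDiff {n : WithTop ℕ∞} : ContDiff ℝ n sig := by
  apply ContDiff.inv
  · exact contDiff_const.add (Real.contDiff_exp.comp contDiff_neg)
  · exact fun t => ne_of_gt (sig_denom_pos t)

lemma sig_hasDerivAt (t : ℝ) :
    HasDerivAt sig (Real.exp (-t) / (1 + Real.exp (-t)) ^ 2) t := by
  have h1 : HasDerivAt (fun s : ℝ => 1 + Real.exp (-s)) (-Real.exp (-t)) t := by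
    have h2 : HasDerivAt (fun s : ℝ => Real.exp (-s)) (Real.exp (-t) * (-1)) t :=
      (Real.hasDerivAt_exp (-t)).comp t (hasDerivAt_neg t)
    simpa using h2.const_add 1
  have := h1.inv (ne_of_gt (sig_denom_pos t))
  rw [show sig = (fun s : ℝ => 1 + Real.exp (-s))⁻¹ from rfl]
  simpa [neg_neg] using this

lemma sig_lipschitz : LipschitzWith 1 sig := by
  apply lipschitzWith_of_nnnorm_deriv_le (fun t => (sig_hasDerivAt t).differentiableAt)
  intro t
  rw [← NNReal.coe_le_coe, coe_nnnorm, NNReal.coe_one, (sig_hasDerivAt t).deriv]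
  rw [Real.norm_eq_abs, abs_div, abs_of_pos (Real.exp_pos _), abs_of_pos (by positivity)]
  rw [div_le_one (by positivity)]
  nlinarith [Real.exp_pos (-t), sq_nonneg (1 + Real.exp (-t))]

lemma sig_sub_le_exp (a b : ℝ) : |sig a - sig b| ≤ |Real.exp a - Real.exp b| := by
  have hA := Real.exp_pos (-a)
  have hB := Real.exp_pos (-b)
  have h1 : sig a - sig b = (Real.exp (-b) - Real.exp (-a)) /
      ((1 + Real.exp (-a)) * (1 + Real.exp (-b))) := by
    rw [sig, sig]
    field_simp
    ring
  have h2 : (Real.exp (-b) - Real.exp (-a)) / (Real.exp (-a) * Real.exp (-b))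
      = Real.exp a - Real.exp b := by
    rw [div_eq_iff (by positivity : Real.exp (-a) * Real.exp (-b) ≠ 0)]
    have ea : Real.exp a * Real.exp (-a) = 1 := by rw [← Real.exp_add]; simp
    have eb : Real.exp b * Real.exp (-b) = 1 := by rw [← Real.exp_add]; simp
    linear_combination Real.exp (-a) * eb - Real.exp (-b) * ea
  rw [h1, ← h2, abs_div, abs_div, abs_of_pos (by positivity : (0:ℝ) < (1 + Real.exp (-a)) * (1 + Real.exp (-b))), abs_of_pos (by positivity : (0:ℝ) < Real.exp (-a) * Real.exp (-b))]
  apply div_le_div_of_nonneg_left (abs_nonneg _) (by positivity)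
  nlinarith

lemma sig_zero : sig 0 = 2⁻¹ := by
  rw [sig, neg_zero, Real.exp_zero]
  norm_num

lemma sig_tendsto_atTop : Tendsto sig atTop (nhds 1) := by
  have h1 : Tendsto (fun s : ℝ => Real.exp (-s)) atTop (nhds 0) :=
    Real.tendsto_exp_atBot.comp tendsto_neg_atTop_atBot
  have h2 : Tendsto (fun s : ℝ => 1 + Real.exp (-s)) atTop (nhds 1) := by
    simpa using tendsto_const_nhds.add h1
  have h3 := h2.inv₀ (by norm_num)
  rw [show sig = fun s : ℝ => (1 + Real.exp (-s))⁻¹ from rfl]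
  simpa using h3

lemma sig_tendsto_atBot : Tendsto sig atBot (nhds 0) := by
  have h1 : Tendsto (fun s : ℝ => Real.exp (-s)) atBot atTop :=
    Real.tendsto_exp_atTop.comp tendsto_neg_atBot_atTop
  have h2 : Tendsto (fun s : ℝ => 1 + Real.exp (-s)) atBot atTop :=
    tendsto_atTop_add_const_left _ 1 h1
  exact h2.inv_tendsto_atTop

lemma exp_sub_one_abs (s : ℝ) : |Real.exp s - 1| ≤ |s| * Real.exp |s| := by
  rcases le_total 0 s with hs | hs
  · rw [abs_of_nonneg hs, abs_of_nonneg (by linarith [Real.one_le_exp hs] : (0:ℝ) ≤ Real.exp s - 1)]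
    have h := Real.add_one_le_exp (-s)
    have h2 := Real.exp_pos s
    have h3 : Real.exp (-s) * Real.exp s = 1 := by
      rw [← Real.exp_add]; simp
    nlinarith
  · have he1 : Real.exp s ≤ 1 := by
      calc Real.exp s ≤ Real.exp 0 := Real.exp_le_exp.2 hs
        _ = 1 := Real.exp_zero
    rw [abs_of_nonpos hs, abs_of_nonpos (by linarith : Real.exp s - 1 ≤ 0)]
    have h1 : s + 1 ≤ Real.exp s := Real.add_one_le_exp s
    have h2 : 1 ≤ Real.exp (-s) := Real.one_le_exp (by linarith)
    nlinarith

-- the sigmoid definitions and facts (analytic!)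
noncomputable def ell (c t : ℝ) : ℝ := if c < t then 1 else if t = c then 2⁻¹ else 0

noncomputable def Uf (c : ℝ) (n : ℕ) (t : ℝ) : ℝ :=
  sig ((n : ℝ) * (t - c)) - sig ((n : ℝ) * (0 - c))

lemma ell_nonneg (c t : ℝ) : 0 ≤ ell c t := by
  unfold ell; split_ifs <;> norm_num

lemma ell_mono (c : ℝ) : Monotone (ell c) := by
  intro a b hab
  unfold ell
  split_ifs <;> norm_num <;>
    first
      | linarith
      | exact absurd (show b = c from le_antisymm (by linarith) (by linarith)) (by assumption)


lemma Uf_abs_le_one (c : ℝ) (n : ℕ) (t : ℝ) : |Uf c n t| ≤ 1 := by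
  unfold Uf
  have h1 := sig_nonneg ((n : ℝ) * (t - c))
  have h2 := sig_le_one ((n : ℝ) * (t - c))
  have h3 := sig_nonneg ((n : ℝ) * (0 - c))
  have h4 := sig_le_one ((n : ℝ) * (0 - c))
  rw [abs_le]
  constructor <;> linarith

lemma Uf_small {c : ℝ} (hc : 0 < c) (n : ℕ) {t : ℝ} (ht : |t| ≤ c / 2) :
    |Uf c n t| ≤ (2 / c) * |t| := by
  have hn0 : (0:ℝ) ≤ (n : ℝ) := Nat.cast_nonneg n
  have habs : |(n:ℝ) * t| = (n:ℝ) * |t| := by rw [abs_mul, Nat.abs_cast]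
  have e1 : (n:ℝ) * (t - c) = (n:ℝ) * t + -((n:ℝ) * c) := by ring
  have e2 : (n:ℝ) * (0 - c) = 0 + -((n:ℝ) * c) := by ring
  calc |Uf c n t| ≤ |Real.exp ((n:ℝ) * (t - c)) - Real.exp ((n:ℝ) * (0 - c))| :=
        sig_sub_le_exp _ _
    _ = |Real.exp ((n:ℝ) * t) - 1| * Real.exp (-((n:ℝ) * c)) := by
        rw [e1, e2, Real.exp_add, Real.exp_add, Real.exp_zero, one_mul,
          show Real.exp ((n:ℝ)*t) * Real.exp (-((n:ℝ)*c)) - Real.exp (-((n:ℝ)*c))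
            = (Real.exp ((n:ℝ)*t) - 1) * Real.exp (-((n:ℝ)*c)) by ring,
          abs_mul, abs_of_pos (Real.exp_pos _)]
    _ ≤ (|(n:ℝ) * t| * Real.exp |(n:ℝ) * t|) * Real.exp (-((n:ℝ) * c)) := by
        apply mul_le_mul_of_nonneg_right (exp_sub_one_abs _) (Real.exp_pos _).le
    _ ≤ ((n:ℝ) * |t| * Real.exp ((n:ℝ) * c / 2)) * Real.exp (-((n:ℝ) * c)) := by
        rw [habs]
        have h1 : (n:ℝ) * |t| ≤ (n:ℝ) * c / 2 := by
          have := mul_le_mul_of_nonneg_left ht hn0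
          linarith
        have h2 : Real.exp ((n:ℝ) * |t|) ≤ Real.exp ((n:ℝ) * c / 2) := Real.exp_le_exp.2 h1
        apply mul_le_mul_of_nonneg_right _ (Real.exp_pos _).le
        apply mul_le_mul_of_nonneg_left h2 (by positivity)
    _ = ((n:ℝ) * Real.exp (-((n:ℝ) * c / 2))) * |t| := by
        rw [mul_assoc, ← Real.exp_add,
          show (n:ℝ) * c / 2 + -((n:ℝ) * c) = -((n:ℝ) * c / 2) by ring]
        ring
    _ ≤ (2 / c) * |t| := by
        apply mul_le_mul_of_nonneg_right _ (abs_nonneg t)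
        rw [le_div_iff₀ hc]
        have hz := Real.add_one_le_exp ((n:ℝ) * c / 2)
        have hep := (Real.exp_pos (-((n:ℝ) * c / 2))).le
        have hee : Real.exp ((n:ℝ) * c / 2) * Real.exp (-((n:ℝ) * c / 2)) = 1 := by
          rw [← Real.exp_add]; simp
        nlinarith [mul_le_mul_of_nonneg_right hz hep, Real.exp_pos (-((n:ℝ) * c / 2))]

lemma Uf_tendsto {c : ℝ} (hc : 0 < c) (t : ℝ) :
    Tendsto (fun n : ℕ => Uf c n t) atTop (nhds (ell c t)) := by
  have hbotc : Tendsto (fun n : ℕ => sig ((n:ℝ) * (0 - c))) atTop (nhds 0) :=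
    sig_tendsto_atBot.comp
      (Tendsto.atTop_mul_const_of_neg (by linarith : (0:ℝ) - c < 0) tendsto_natCast_atTop_atTop)
  rcases lt_trichotomy c t with h | h | h
  · have h1 : Tendsto (fun n : ℕ => sig ((n:ℝ) * (t - c))) atTop (nhds 1) :=
      sig_tendsto_atTop.comp
        (Tendsto.atTop_mul_const (by linarith : (0:ℝ) < t - c) tendsto_natCast_atTop_atTop)
    have := h1.sub hbotc
    rw [sub_zero] at this
    rw [ell, if_pos h]
    exact this
  · subst h
    have heq : (fun n : ℕ => Uf c n c) = fun n : ℕ => sig 0 - sig ((n:ℝ) * (0 - c)) := by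
      funext n; rw [Uf, sub_self, mul_zero]
    rw [show ell c c = 2⁻¹ by rw [ell, if_neg (lt_irrefl c), if_pos rfl]]
    rw [heq]
    have := (tendsto_const_nhds (x := sig 0) (f := atTop (α := ℕ))).sub hbotc
    rw [sub_zero, sig_zero] at this
    simpa [sig_zero] using this
  · have h1 : Tendsto (fun n : ℕ => sig ((n:ℝ) * (t - c))) atTop (nhds 0) :=
      sig_tendsto_atBot.comp
        (Tendsto.atTop_mul_const_of_neg (by linarith : t - c < 0) tendsto_natCast_atTop_atTop)
    have := h1.sub hbotc
    rw [sub_zero] at this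
    rw [ell, if_neg (by linarith), if_neg (by linarith)]
    exact this

lemma sig_continuous : Continuous sig := (sig_contDiff (n := 1)).continuous

lemma Uf_continuous (c : ℝ) (n : ℕ) : Continuous (Uf c n) :=
  (sig_continuous.comp (continuous_const.mul (continuous_id.sub continuous_const))).sub
    continuous_const


lemma quadrant_c (ν : Measure (ℝ × ℝ)) (x : ℝ × ℝ)
    (hlevy : (∫⁻ y, ENNReal.ofReal (min 1 (‖y‖ ^ 2)) ∂ν) < ⊤)
    (hpos : ∀ f g : ℝ × ℝ → ℝ,
      ContDiff ℝ (⊤ : ℕ∞) f → ContDiff ℝ (⊤ : ℕ∞) g → Monotone f → Monotone g →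
      (∃ C, ∀ y, |f y| ≤ C) → (∃ C, ∀ y, |g y| ≤ C) →
      (∃ C, ∀ y, ‖fderiv ℝ f y‖ ≤ C) → (∃ C, ∀ y, ‖fderiv ℝ g y‖ ≤ C) →
      0 ≤ ∫ y, (f (x + y) - f x) * (g (x + y) - g x) ∂ν)
    (ε₁ ε₂ : ℝ) (hε : (ε₁ = 1 ∧ ε₂ = -1) ∨ (ε₁ = -1 ∧ ε₂ = 1))
    (c : ℝ) (hc : 0 < c) :
    ν {y : ℝ × ℝ | c < ε₁ * y.1 ∧ c < ε₂ * y.2} = 0 := by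
  have hε1 : ε₁ = 1 ∨ ε₁ = -1 := hε.elim (fun h => Or.inl h.1) (fun h => Or.inr h.1)
  have hε2 : ε₂ = 1 ∨ ε₂ = -1 := hε.elim (fun h => Or.inr h.2) (fun h => Or.inl h.2)
  have habs1 : |ε₁| = 1 := by rcases hε1 with rfl | rfl <;> simp
  have habs2 : |ε₂| = 1 := by rcases hε2 with rfl | rfl <;> simp
  have hprod : ε₁ * ε₂ = -1 := by rcases hε with ⟨rfl, rfl⟩ | ⟨rfl, rfl⟩ <;> norm_num
  -- the sequence of products
  set G : ℕ → ℝ × ℝ → ℝ := fun n y => Uf c n (ε₁ * y.1) * Uf c n (ε₂ * y.2) with hG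
  -- limit function
  set L : ℝ × ℝ → ℝ := fun y => ell c (ε₁ * y.1) * ell c (ε₂ * y.2) with hL
  -- monotone helper
  have hm : ∀ (ε : ℝ), (ε = 1 ∨ ε = -1) → ∀ n : ℕ,
      Monotone (fun t : ℝ => ε * sig ((n:ℝ) * (ε * t - c))) := by
    rintro ε (rfl | rfl) n a b hab
    · dsimp only
      have h := sig_mono (mul_le_mul_of_nonneg_left
        (show (1:ℝ) * a - c ≤ (1:ℝ) * b - c by linarith) (Nat.cast_nonneg n))
      linarith
    · dsimp only
      have h := sig_mono (mul_le_mul_of_nonneg_left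
        (show (-1:ℝ) * b - c ≤ (-1:ℝ) * a - c by linarith) (Nat.cast_nonneg n))
      linarith
  -- step 1 : for every n, ∫ G n ∂ν ≤ 0
  have hIn : ∀ n : ℕ, ∫ y, G n y ∂ν ≤ 0 := by
    intro n
    set f : ℝ × ℝ → ℝ := fun z => ε₁ * sig ((n:ℝ) * (ε₁ * (z.1 - x.1) - c)) with hf
    set g : ℝ × ℝ → ℝ := fun z => ε₂ * sig ((n:ℝ) * (ε₂ * (z.2 - x.2) - c)) with hg
    have hinner1 : ContDiff ℝ (⊤ : ℕ∞) (fun z : ℝ × ℝ => (n:ℝ) * (ε₁ * (z.1 - x.1) - c)) :=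
      contDiff_const.mul ((contDiff_const.mul (contDiff_fst.sub contDiff_const)).sub
        contDiff_const)
    have hinner2 : ContDiff ℝ (⊤ : ℕ∞) (fun z : ℝ × ℝ => (n:ℝ) * (ε₂ * (z.2 - x.2) - c)) :=
      contDiff_const.mul ((contDiff_const.mul (contDiff_snd.sub contDiff_const)).sub
        contDiff_const)
    have hcf : ContDiff ℝ (⊤ : ℕ∞) f :=
      contDiff_const.mul (sig_contDiff.comp hinner1 : ContDiff ℝ (⊤ : ℕ∞) _)
    have hcg : ContDiff ℝ (⊤ : ℕ∞) g :=
      contDiff_const.mul (sig_contDiff.comp hinner2 : ContDiff ℝ (⊤ : ℕ∞) _)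
    have hmf : Monotone f := (hm ε₁ hε1 n).comp (fun a b hab => sub_le_sub_right hab.1 _)
    have hmg : Monotone g := (hm ε₂ hε2 n).comp (fun a b hab => sub_le_sub_right hab.2 _)
    have hbf : ∀ y, |f y| ≤ 1 := fun y => by
      rw [hf]; simp only; rw [abs_mul, habs1, one_mul]; exact sig_abs_le_one _
    have hbg : ∀ y, |g y| ≤ 1 := fun y => by
      rw [hg]; simp only; rw [abs_mul, habs2, one_mul]; exact sig_abs_le_one _
    have hsl : ∀ a b : ℝ, |sig a - sig b| ≤ |a - b| := by
      intro a b
      have := sig_lipschitz.dist_le_mul a b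
      rwa [Real.dist_eq, Real.dist_eq, NNReal.coe_one, one_mul] at this
    have hlf : LipschitzWith (n : NNReal) f := by
      apply LipschitzWith.of_dist_le_mul
      intro z w
      rw [Real.dist_eq, hf]
      simp only
      rw [show ε₁ * sig ((n:ℝ) * (ε₁ * (z.1 - x.1) - c))
            - ε₁ * sig ((n:ℝ) * (ε₁ * (w.1 - x.1) - c))
          = ε₁ * (sig ((n:ℝ) * (ε₁ * (z.1 - x.1) - c))
            - sig ((n:ℝ) * (ε₁ * (w.1 - x.1) - c))) by ring, abs_mul, habs1, one_mul]
      calc |sig ((n:ℝ) * (ε₁ * (z.1 - x.1) - c)) - sig ((n:ℝ) * (ε₁ * (w.1 - x.1) - c))|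
          ≤ |(n:ℝ) * (ε₁ * (z.1 - x.1) - c) - (n:ℝ) * (ε₂ * 0 + ε₁ * (w.1 - x.1) - c)| := by
            simpa using hsl _ _
        _ = (n:ℝ) * |z.1 - w.1| := by
            rw [show (n:ℝ) * (ε₁ * (z.1 - x.1) - c) - (n:ℝ) * (ε₂ * 0 + ε₁ * (w.1 - x.1) - c)
              = (n:ℝ) * (ε₁ * (z.1 - w.1)) by ring, abs_mul, abs_mul, habs1, one_mul,
              Nat.abs_cast]
        _ ≤ (n:ℝ) * dist z w := by
            apply mul_le_mul_of_nonneg_left _ (Nat.cast_nonneg n)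
            rw [← Real.dist_eq, Prod.dist_eq]
            exact le_max_left _ _
        _ = ((n : NNReal) : ℝ) * dist z w := by norm_num
    have hlg : LipschitzWith (n : NNReal) g := by
      apply LipschitzWith.of_dist_le_mul
      intro z w
      rw [Real.dist_eq, hg]
      simp only
      rw [show ε₂ * sig ((n:ℝ) * (ε₂ * (z.2 - x.2) - c))
            - ε₂ * sig ((n:ℝ) * (ε₂ * (w.2 - x.2) - c))
          = ε₂ * (sig ((n:ℝ) * (ε₂ * (z.2 - x.2) - c))
            - sig ((n:ℝ) * (ε₂ * (w.2 - x.2) - c))) by ring, abs_mul, habs2, one_mul]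
      calc |sig ((n:ℝ) * (ε₂ * (z.2 - x.2) - c)) - sig ((n:ℝ) * (ε₂ * (w.2 - x.2) - c))|
          ≤ |(n:ℝ) * (ε₂ * (z.2 - x.2) - c) - (n:ℝ) * (ε₁ * 0 + ε₂ * (w.2 - x.2) - c)| := by
            simpa using hsl _ _
        _ = (n:ℝ) * |z.2 - w.2| := by
            rw [show (n:ℝ) * (ε₂ * (z.2 - x.2) - c) - (n:ℝ) * (ε₁ * 0 + ε₂ * (w.2 - x.2) - c)
              = (n:ℝ) * (ε₂ * (z.2 - w.2)) by ring, abs_mul, abs_mul, habs2, one_mul,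
              Nat.abs_cast]
        _ ≤ (n:ℝ) * dist z w := by
            apply mul_le_mul_of_nonneg_left _ (Nat.cast_nonneg n)
            rw [← Real.dist_eq, Prod.dist_eq]
            exact le_max_right _ _
        _ = ((n : NNReal) : ℝ) * dist z w := by norm_num
    have h0 : 0 ≤ ∫ y, (f (x + y) - f x) * (g (x + y) - g x) ∂ν :=
      hpos f g hcf hcg hmf hmg ⟨1, hbf⟩ ⟨1, hbg⟩
        ⟨((n : NNReal) : ℝ), fun y => norm_fderiv_le_of_lipschitz ℝ hlf⟩
        ⟨((n : NNReal) : ℝ), fun y => norm_fderiv_le_of_lipschitz ℝ hlg⟩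
    have key : ∀ y : ℝ × ℝ, (f (x + y) - f x) * (g (x + y) - g x) = -(G n y) := by
      intro y
      rw [hf, hg, hG]
      simp only [Prod.fst_add, Prod.snd_add]
      rw [show x.1 + y.1 - x.1 = y.1 by ring, show x.2 + y.2 - x.2 = y.2 by ring,
        sub_self, sub_self, mul_zero, mul_zero]
      unfold Uf
      rw [show (n:ℝ) * (ε₁ * y.1 - c) = (n:ℝ) * ((ε₁ * y.1) - c) by ring,
        show (n:ℝ) * (ε₂ * y.2 - c) = (n:ℝ) * ((ε₂ * y.2) - c) by ring,
        show (n:ℝ) * (0 - c) = (n:ℝ) * ((0:ℝ) - c) by ring]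
      linear_combination ((sig ((n:ℝ) * (ε₁ * y.1 - c)) - sig ((n:ℝ) * (0 - c))) *
        (sig ((n:ℝ) * (ε₂ * y.2 - c)) - sig ((n:ℝ) * (0 - c)))) * hprod
    have heq : ∫ y, (f (x + y) - f x) * (g (x + y) - g x) ∂ν = -∫ y, G n y ∂ν := by
      rw [← integral_neg]
      exact integral_congr_ae (Eventually.of_forall key)
    rw [heq] at h0
    linarith
  -- step 2 : dominated convergence
  set M : ℝ := max ((2/c) * (2/c)) (min 1 (c^2/4))⁻¹ with hM
  have hminpos : 0 < min 1 (c^2/4) := by positivity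
  have hM1 : (1:ℝ) ≤ M := by
    apply le_max_of_le_right
    have h1 : min 1 (c^2/4) ≤ 1 := min_le_left _ _
    simpa using inv_anti₀ hminpos h1
  have hbound : ∀ n y, |G n y| ≤ M * min 1 (‖y‖^2) := by
    intro n y
    have h1 := Uf_abs_le_one c n (ε₁ * y.1)
    have h2 := Uf_abs_le_one c n (ε₂ * y.2)
    have hy1 : |ε₁ * y.1| ≤ ‖y‖ := by
      rw [abs_mul, habs1, one_mul, ← Real.norm_eq_abs]; exact norm_fst_le y
    have hy2 : |ε₂ * y.2| ≤ ‖y‖ := by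
      rw [abs_mul, habs2, one_mul, ← Real.norm_eq_abs]; exact norm_snd_le y
    have habsG : |G n y| = |Uf c n (ε₁ * y.1)| * |Uf c n (ε₂ * y.2)| := by
      rw [hG]; exact abs_mul _ _
    have hUU1 : |G n y| ≤ 1 := by
      rw [habsG]
      nlinarith [abs_nonneg (Uf c n (ε₁ * y.1)), abs_nonneg (Uf c n (ε₂ * y.2))]
    rcases le_total (‖y‖^2) 1 with h | h
    · rw [min_eq_right h]
      rcases le_total ‖y‖ (c/2) with hyc | hyc
      · have b1 : |Uf c n (ε₁ * y.1)| ≤ (2/c) * |ε₁ * y.1| :=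
          Uf_small hc n (le_trans hy1 hyc)
        have b2 : |Uf c n (ε₂ * y.2)| ≤ (2/c) * |ε₂ * y.2| :=
          Uf_small hc n (le_trans hy2 hyc)
        have hA : (0:ℝ) ≤ 2/c := by positivity
        have hMA : (2/c)*(2/c) ≤ M := le_max_left _ _
        have hUU : |G n y| ≤ ((2/c) * |ε₁ * y.1|) * ((2/c) * |ε₂ * y.2|) := by
          rw [habsG]
          exact mul_le_mul b1 b2 (abs_nonneg _) (by positivity)
        have hyy : |ε₁ * y.1| * |ε₂ * y.2| ≤ ‖y‖ * ‖y‖ :=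
          mul_le_mul hy1 hy2 (abs_nonneg _) (norm_nonneg y)
        nlinarith [abs_nonneg (ε₁ * y.1), abs_nonneg (ε₂ * y.2), norm_nonneg y]
      · have hy2c : c^2/4 ≤ ‖y‖^2 := by nlinarith [norm_nonneg y]
        have hmle : min 1 (c^2/4) ≤ ‖y‖^2 := le_trans (min_le_right _ _) hy2c
        have hMB : (min 1 (c^2/4))⁻¹ ≤ M := le_max_right _ _
        have hM0 : (0:ℝ) ≤ M := by linarith
        have hinv : (min 1 (c^2/4))⁻¹ * min 1 (c^2/4) = 1 :=
          inv_mul_cancel₀ (ne_of_gt hminpos)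
        have h3 : (min 1 (c^2/4))⁻¹ * min 1 (c^2/4) ≤ M * ‖y‖^2 :=
          mul_le_mul hMB hmle (le_of_lt hminpos) hM0
        rw [hinv] at h3
        linarith
    · rw [min_eq_left h, mul_one]
      linarith
  have hminint : Integrable (fun y : ℝ × ℝ => min 1 (‖y‖^2)) ν := by
    constructor
    · exact (continuous_const.min (continuous_norm.pow 2)).aestronglyMeasurable
    · rw [hasFiniteIntegral_iff_ofReal
        (Eventually.of_forall (fun y => le_min zero_le_one (by positivity)))]
      exact hlevy
  have hboundint : Integrable (fun y : ℝ × ℝ => M * min 1 (‖y‖^2)) ν := hminint.const_mul M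
  have hGmeas : ∀ n, AEStronglyMeasurable (G n) ν := fun n =>
    (((Uf_continuous c n).comp (continuous_const.mul continuous_fst)).mul
      ((Uf_continuous c n).comp (continuous_const.mul continuous_snd))).aestronglyMeasurable
  have hLlim : ∀ y, Tendsto (fun n => G n y) atTop (nhds (L y)) := fun y =>
    (Uf_tendsto hc (ε₁ * y.1)).mul (Uf_tendsto hc (ε₂ * y.2))
  have htendI : Tendsto (fun n => ∫ y, G n y ∂ν) atTop (nhds (∫ y, L y ∂ν)) :=
    tendsto_integral_of_dominated_convergence (fun y => M * min 1 (‖y‖^2)) hGmeas hboundint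
      (fun n => Eventually.of_forall (fun y => by
        rw [Real.norm_eq_abs]; exact hbound n y))
      (Eventually.of_forall hLlim)
  have hL0 : ∫ y, L y ∂ν ≤ 0 := le_of_tendsto htendI (Eventually.of_forall hIn)
  have hLmeas : AEStronglyMeasurable L ν :=
    (((ell_mono c).measurable.comp (measurable_fst.const_mul ε₁)).mul
      ((ell_mono c).measurable.comp (measurable_snd.const_mul ε₂))).aestronglyMeasurable
  have hLnonneg : ∀ y, 0 ≤ L y := fun y => mul_nonneg (ell_nonneg _ _) (ell_nonneg _ _)
  have hLbound : ∀ y, |L y| ≤ M * min 1 (‖y‖^2) := fun y =>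
    le_of_tendsto (hLlim y).abs (Eventually.of_forall (fun n => hbound n y))
  have hLint : Integrable L ν := hboundint.mono' hLmeas
    (Eventually.of_forall (fun y => by rw [Real.norm_eq_abs]; exact hLbound y))
  have hLz : ∫ y, L y ∂ν = 0 := le_antisymm hL0 (integral_nonneg hLnonneg)
  have hae : L =ᵐ[ν] 0 := (integral_eq_zero_iff_of_nonneg hLnonneg hLint).mp hLz
  have h10 : ν {y | ¬ L y = 0} = 0 := ae_iff.mp hae
  apply measure_mono_null _ h10
  intro y hy
  simp only [Set.mem_setOf_eq] at hy ⊢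
  have : L y = 1 := by
    rw [hL]
    dsimp only
    simp only [ell, if_pos hy.1, if_pos hy.2]
    norm_num
  rw [this]
  norm_num


lemma quadrant_zero (ν : Measure (ℝ × ℝ)) (x : ℝ × ℝ)
    (hlevy : (∫⁻ y, ENNReal.ofReal (min 1 (‖y‖ ^ 2)) ∂ν) < ⊤)
    (hpos : ∀ f g : ℝ × ℝ → ℝ,
      ContDiff ℝ (⊤ : ℕ∞) f → ContDiff ℝ (⊤ : ℕ∞) g → Monotone f → Monotone g →
      (∃ C, ∀ y, |f y| ≤ C) → (∃ C, ∀ y, |g y| ≤ C) →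
      (∃ C, ∀ y, ‖fderiv ℝ f y‖ ≤ C) → (∃ C, ∀ y, ‖fderiv ℝ g y‖ ≤ C) →
      0 ≤ ∫ y, (f (x + y) - f x) * (g (x + y) - g x) ∂ν)
    (ε₁ ε₂ : ℝ) (hε : (ε₁ = 1 ∧ ε₂ = -1) ∨ (ε₁ = -1 ∧ ε₂ = 1)) :
    ν {y : ℝ × ℝ | 0 < ε₁ * y.1 ∧ 0 < ε₂ * y.2} = 0 := by
  have hsub : {y : ℝ × ℝ | 0 < ε₁ * y.1 ∧ 0 < ε₂ * y.2} ⊆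
      ⋃ m : ℕ, {y : ℝ × ℝ | 1 / ((m:ℝ) + 1) < ε₁ * y.1 ∧ 1 / ((m:ℝ) + 1) < ε₂ * y.2} := by
    intro y hy
    have hmin : (0:ℝ) < min (ε₁ * y.1) (ε₂ * y.2) := lt_min_iff.2 ⟨hy.1, hy.2⟩
    obtain ⟨m, hm⟩ := exists_nat_one_div_lt hmin
    exact Set.mem_iUnion.2 ⟨m, ⟨lt_of_lt_of_le hm (min_le_left _ _),
      lt_of_lt_of_le hm (min_le_right _ _)⟩⟩
  apply measure_mono_null hsub
  apply measure_iUnion_null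
  intro m
  exact quadrant_c ν x hlevy hpos ε₁ ε₂ hε (1 / ((m:ℝ) + 1)) (by positivity)

end Statement13Aux

open Statement13Aux

/-- Let `ν` be a Lévy measure on `ℝ²` and `x ∈ ℝ²`. If for all bounded smooth
componentwise nondecreasing `f, g : ℝ² → ℝ` with bounded derivatives one has
`∫ (f(x+y) − f(x))(g(x+y) − g(x)) ν(dy) ≥ 0`, then `ν` is concentrated on the union of the
positive and negative orthants. -/
theorem positive_integrand_implies_levy_measure_on_orthants
    (ν : Measure (ℝ × ℝ)) (x : ℝ × ℝ)
    (h0 : ν {0} = 0)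
    (hlevy : (∫⁻ y, ENNReal.ofReal (min 1 (‖y‖ ^ 2)) ∂ν) < ⊤)
    (hpos : ∀ f g : ℝ × ℝ → ℝ,
      ContDiff ℝ (⊤ : ℕ∞) f → ContDiff ℝ (⊤ : ℕ∞) g → Monotone f → Monotone g →
      (∃ C, ∀ y, |f y| ≤ C) → (∃ C, ∀ y, |g y| ≤ C) →
      (∃ C, ∀ y, ‖fderiv ℝ f y‖ ≤ C) → (∃ C, ∀ y, ‖fderiv ℝ g y‖ ≤ C) →
      0 ≤ ∫ y, (f (x + y) - f x) * (g (x + y) - g x) ∂ν) :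
    ν {y : ℝ × ℝ | 0 < y.1 ∧ y.2 < 0} = 0 ∧ ν {y : ℝ × ℝ | y.1 < 0 ∧ 0 < y.2} = 0 := by
  constructor
  · have h := quadrant_zero ν x hlevy hpos 1 (-1) (Or.inl ⟨rfl, rfl⟩)
    have hset : {y : ℝ × ℝ | 0 < y.1 ∧ y.2 < 0}
        = {y : ℝ × ℝ | 0 < (1:ℝ) * y.1 ∧ 0 < (-1:ℝ) * y.2} := by
      ext y
      simp only [Set.mem_setOf_eq, one_mul, neg_one_mul, neg_pos]
    rw [hset]
    exact h
  · have h := quadrant_zero ν x hlevy hpos (-1) 1 (Or.inr ⟨rfl, rfl⟩)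
    have hset : {y : ℝ × ℝ | y.1 < 0 ∧ 0 < y.2}
        = {y : ℝ × ℝ | 0 < (-1:ℝ) * y.1 ∧ 0 < (1:ℝ) * y.2} := by
      ext y
      simp only [Set.mem_setOf_eq, one_mul, neg_one_mul, neg_pos]
    rw [hset]
    exact h
end

section
/- Let (X_t)_{t ≥ 0} be an ℝ^d-valued stochastic process on a probability space that is stochastically continuous, i.e. for every t ≥ 0 and a > 0, P(|X_u − X_t| ≥ a) → 0 as u → t. For 0 ≤ s ≤ t and bounded uniformly continuous f : ℝ^d → ℝ define T_{s,t} f(x) = E f(X_t − X_s + x). Then the family (T_{s,t}) is strongly continuous: for every 0 ≤ s ≤ t and every bounded uniformly continuous f, if (u_n, v_n) → (s, t) with 0 ≤ u_n ≤ v_n for all n, then sup_{x ∈ ℝ^d} |T_{u_n, v_n} f(x) − T_{s,t} f(x)| → 0. -/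
/-!
Stochastic continuity says that `X_u → X_t` in probability as `u → t`, so the increments
`X_{v_n} - X_{u_n}` converge in probability to `X_t - X_s`. For a bounded uniformly continuous `f`
with modulus `δ` at level `η`, the integrands `f (Y + x)` and `f (Z + x)` differ by at most `η`
off the event `{δ ≤ |Y - Z|}` and by at most `2C` on it; neither bound depends on the shift `x`,
which is why the convergence is uniform.
-/

open MeasureTheory Filter Topology

namespace MeasureTheory.TendstoInMeasure

variable {Ω ι E : Type*} [MeasurableSpace Ω] {P : Measure Ω} [SeminormedAddCommGroup E]
  {l : Filter ι} {Y Y' : ι → Ω → E} {Z Z' : Ω → E}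

protected theorem sub (h : TendstoInMeasure P Y l Z) (h' : TendstoInMeasure P Y' l Z') :
    TendstoInMeasure P (Y - Y') l (Z - Z') := by
  rw [tendstoInMeasure_iff_norm] at h h' ⊢
  intro ε hε
  have hsub : ∀ i, {ω | ε ≤ ‖(Y - Y') i ω - (Z - Z') ω‖} ⊆
      {ω | ε / 2 ≤ ‖Y i ω - Z ω‖} ∪ {ω | ε / 2 ≤ ‖Y' i ω - Z' ω‖} := by
    intro i ω hω
    by_contra hnot
    simp only [Set.mem_union, Set.mem_ofPred_eq, not_or, not_le] at hω hnot
    have hsplit : (Y - Y') i ω - (Z - Z') ω = (Y i ω - Z ω) - (Y' i ω - Z' ω) := by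
      simp only [Pi.sub_apply]; abel
    linarith [hsplit ▸ norm_sub_le (Y i ω - Z ω) (Y' i ω - Z' ω)]
  refine tendsto_of_tendsto_of_tendsto_of_le_of_le tendsto_const_nhds
    (by simpa using (h _ (half_pos hε)).add (h' _ (half_pos hε))) (fun _ ↦ zero_le)
    fun i ↦ (measure_mono (hsub i)).trans (measure_union_le _ _)

end MeasureTheory.TendstoInMeasure

section

variable {Ω E : Type*} [MeasurableSpace Ω] {P : Measure Ω} [IsProbabilityMeasure P]

theorem dist_integral_comp_le_of_dist_lt [PseudoMetricSpace E] {f : E → ℝ} {C δ η : ℝ} (hη0 : 0 ≤ η)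
    (hf : Continuous f) (hC : ∀ x, |f x| ≤ C) (hη : ∀ a b, dist a b < δ → dist (f a) (f b) ≤ η)
    {Y Z : Ω → E} (hY : AEStronglyMeasurable Y P) (hZ : AEStronglyMeasurable Z P) :
    dist (∫ ω, f (Y ω) ∂P) (∫ ω, f (Z ω) ∂P) ≤ η + 2 * C * P.real {ω | δ ≤ dist (Y ω) (Z ω)} := by
  set A := {ω | δ ≤ dist (Y ω) (Z ω)}
  have hA : NullMeasurableSet A P :=
    aestronglyMeasurable_const.nullMeasurableSet_le (hY.dist hZ)
  have hint : ∀ {W : Ω → E}, AEStronglyMeasurable W P → Integrable (fun ω ↦ f (W ω)) P :=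
    fun hW ↦ .of_bound (hf.comp_aestronglyMeasurable hW) C (.of_forall fun ω ↦ hC _)
  have hbound : Integrable (fun ω ↦ η + A.indicator (fun _ ↦ 2 * C) ω) P :=
    (integrable_const _).add ((integrable_const _).indicator₀ hA)
  have hpointwise : ∀ ω, |f (Y ω) - f (Z ω)| ≤ η + A.indicator (fun _ ↦ 2 * C) ω := by
    intro ω
    by_cases hω : ω ∈ A
    · rw [Set.indicator_of_mem hω]
      linarith [abs_sub (f (Y ω)) (f (Z ω)), hC (Y ω), hC (Z ω)]
    · rw [Set.indicator_of_notMem hω, ← Real.dist_eq]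
      simpa using hη _ _ (not_le.1 hω)
  calc dist (∫ ω, f (Y ω) ∂P) (∫ ω, f (Z ω) ∂P)
      = |∫ ω, (f (Y ω) - f (Z ω)) ∂P| := by rw [Real.dist_eq, integral_sub (hint hY) (hint hZ)]
    _ ≤ ∫ ω, |f (Y ω) - f (Z ω)| ∂P := abs_integral_le_integral_abs
    _ ≤ ∫ ω, (η + A.indicator (fun _ ↦ 2 * C) ω) ∂P :=
        integral_mono ((hint hY).sub (hint hZ)).abs hbound hpointwise
    _ = η + 2 * C * P.real A := by
        rw [integral_add (integrable_const _) ((integrable_const _).indicator₀ hA),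
          integral_const, integral_indicator₀ hA, setIntegral_const]
        simp [mul_comm]

theorem tendstoUniformly_integral_comp_add_of_tendstoInMeasure {ι : Type*} {l : Filter ι}
    [SeminormedAddCommGroup E] {f : E → ℝ} (hf : UniformContinuous f) (hbdd : ∃ C, ∀ x, |f x| ≤ C)
    {Y : ι → Ω → E} {Z : Ω → E} (hY : ∀ i, AEStronglyMeasurable (Y i) P)
    (hZ : AEStronglyMeasurable Z P) (hYZ : TendstoInMeasure P Y l Z) :
    TendstoUniformly (fun i x ↦ ∫ ω, f (Y i ω + x) ∂P) (fun x ↦ ∫ ω, f (Z ω + x) ∂P) l := by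
  obtain ⟨C, hC⟩ := hbdd
  rw [Metric.tendstoUniformly_iff]
  intro ε hε
  obtain ⟨δ, hδ, hfδ⟩ := Metric.uniformContinuous_iff.1 hf (ε / 2) (half_pos hε)
  have hsmall : ∀ᶠ i in l, 2 * C * P.real {ω | δ ≤ dist (Z ω) (Y i ω)} < ε / 2 := by
    have h := ((tendstoInMeasure_iff_measureReal_dist.1 hYZ δ hδ).const_mul (2 * C))
    rw [mul_zero] at h
    filter_upwards [h.eventually_lt_const (half_pos hε)] with i hi
    simpa only [dist_comm] using hi
  filter_upwards [hsmall] with i hi x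
  have hshift := dist_integral_comp_le_of_dist_lt (f := fun y ↦ f (y + x)) (half_pos hε).le
    (hf.continuous.comp (continuous_add_const x)) (fun y ↦ hC (y + x))
    (fun a b hab ↦ (hfδ (by rwa [dist_add_right])).le) hZ (hY i)
  linarith

end

/-- If `(X_t)_{t≥0}` is a stochastically continuous `ℝ^d`-valued process, then
the Markov evolution `T_{s,t} f (x) = E f(X_t − X_s + x)` is strongly continuous on bounded
uniformly continuous functions: whenever `(u_n, v_n) → (s, t)` with `0 ≤ u_n ≤ v_n`,
`T_{u_n, v_n} f → T_{s,t} f` uniformly in `x`. -/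
theorem additive_evolution_strongly_continuous
    {Ω : Type*} [MeasurableSpace Ω] (P : Measure Ω) [IsProbabilityMeasure P]
    (d : ℕ) (X : ℝ → Ω → (Fin d → ℝ)) (hX : ∀ t, Measurable (X t))
    (hstoch : ∀ t : ℝ, 0 ≤ t → ∀ a : ℝ, 0 < a →
      Filter.Tendsto (fun u => P {ω | a ≤ ‖X u ω - X t ω‖})
        (nhdsWithin t (Set.Ici 0)) (nhds 0)) :
    ∀ s t : ℝ, 0 ≤ s → s ≤ t →
      ∀ f : (Fin d → ℝ) → ℝ, UniformContinuous f → (∃ C, ∀ x, |f x| ≤ C) →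
        ∀ u v : ℕ → ℝ, (∀ n, 0 ≤ u n) → (∀ n, u n ≤ v n) →
          Filter.Tendsto u Filter.atTop (nhds s) →
          Filter.Tendsto v Filter.atTop (nhds t) →
          TendstoUniformly
            (fun n x => ∫ ω, f (X (v n) ω - X (u n) ω + x) ∂P)
            (fun x => ∫ ω, f (X t ω - X s ω + x) ∂P) Filter.atTop := by
  intro s t hs hst f hf hbdd u v hu huv hus hvt
  have hcont : ∀ r, 0 ≤ r → TendstoInMeasure P X (𝓝[Set.Ici 0] r) (X r) :=
    fun r hr ↦ tendstoInMeasure_iff_norm.2 (hstoch r hr)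
  have hu' : Tendsto u atTop (𝓝[Set.Ici 0] s) :=
    tendsto_nhdsWithin_iff.2 ⟨hus, .of_forall hu⟩
  have hv' : Tendsto v atTop (𝓝[Set.Ici 0] t) :=
    tendsto_nhdsWithin_iff.2 ⟨hvt, .of_forall fun n ↦ (hu n).trans (huv n)⟩
  exact tendstoUniformly_integral_comp_add_of_tendstoInMeasure hf hbdd
    (fun n ↦ ((hX (v n)).sub (hX (u n))).aestronglyMeasurable)
    ((hX t).sub (hX s)).aestronglyMeasurable
    (((hcont t (hs.trans hst)).comp hv').sub ((hcont s hs).comp hu'))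
end
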